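/- arXiv:2104.02348 — 8 statements merged into one kernel-verified Lean document; each statement's English description precedes it below -/
import Mathlib

section
/- Let T be a trigonometric polynomial of degree at most n, i.e., T(t) = a₀ + Σ_{k=1}^n (a_k cos(kt) + b_k sin(kt)) with real coefficients. Then for every θ ∈ ℝ, |T'(θ)| ≤ n · sup_{t∈ℝ} |T(t)|. -/
/-!
M. Riesz's interpolation formula. At the nodes `t_j = (2j+1)π/(2n)`, `j < 2n`, where
`sin (n t_j) = (-1)^j`, the weights `w_j = (-1)^j / sin² (t_j / 2)` satisfy
`∑ w_j cos (k t_j) = 0` and `∑ w_j sin (k t_j) = 4nk` for `k ≤ n`. Hence every trigonometric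
polynomial of degree `≤ n` has `4n T'(θ) = ∑ w_j T(θ + t_j)`, and since `∑ |w_j| = 4n²`
(the case `k = n`, as `|w_j| = w_j sin (n t_j)`), `|T'(θ)| ≤ n ‖T‖`.
-/

open Real Finset

noncomputable def trigPoly (n : ℕ) (a b : ℕ → ℝ) (t : ℝ) : ℝ :=
  a 0 + ∑ k ∈ Icc 1 n, (a k * cos (k * t) + b k * sin (k * t))

section TrigPoly

variable (n : ℕ) (a b : ℕ → ℝ)

theorem trigPoly_periodic : Function.Periodic (trigPoly n a b) (2 * π) := by
  intro t
  simp only [trigPoly, mul_add, cos_add_nat_mul_two_pi, sin_add_nat_mul_two_pi]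

theorem continuous_trigPoly : Continuous (trigPoly n a b) := by
  unfold trigPoly; fun_prop

theorem bddAbove_range_abs_trigPoly : BddAbove (Set.range fun t => |trigPoly n a b t|) := by
  obtain ⟨C, hC⟩ := isBounded_iff_forall_norm_le.mp <|
    (trigPoly_periodic n a b).isBounded_of_continuous two_pi_pos.ne' (continuous_trigPoly n a b)
  exact ⟨C, Set.forall_mem_range.mpr fun t => hC _ (Set.mem_range_self t)⟩

theorem hasDerivAt_trigPoly (θ : ℝ) :
    HasDerivAt (trigPoly n a b)
      (∑ k ∈ Icc 1 n, k * (b k * cos (k * θ) - a k * sin (k * θ))) θ := by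
  have hterm (k : ℕ) : HasDerivAt (fun t : ℝ => a k * cos (k * t) + b k * sin (k * t))
      (k * (b k * cos (k * θ) - a k * sin (k * θ))) θ := by
    have hlin : HasDerivAt (fun t : ℝ => k * t) k θ := by
      simpa using (hasDerivAt_id θ).const_mul (k : ℝ)
    exact ((hlin.cos.const_mul (a k)).add (hlin.sin.const_mul (b k))).congr_deriv (by ring)
  exact ((hasDerivAt_const θ (a 0)).add (HasDerivAt.fun_sum fun k _ => hterm k)).congr_deriv
    (zero_add _)

theorem trigPoly_add (θ t : ℝ) :
    trigPoly n a b (θ + t) = a 0 + ∑ k ∈ Icc 1 n,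
      ((a k * cos (k * θ) + b k * sin (k * θ)) * cos (k * t)
        + (b k * cos (k * θ) - a k * sin (k * θ)) * sin (k * t)) := by
  simp only [trigPoly, mul_add, cos_add, sin_add]
  congr 1
  exact sum_congr rfl fun k _ => by ring

end TrigPoly

theorem two_mul_sin_half_mul_sum_range_cos (N : ℕ) (x d : ℝ) :
    2 * sin (d / 2) * ∑ j ∈ range N, cos (x + j * d)
      = sin (x + (N - 1 / 2) * d) - sin (x - d / 2) := by
  have hstep (j : ℕ) : 2 * sin (d / 2) * cos (x + j * d)
      = sin (x + ((j + 1 : ℕ) - 1 / 2) * d) - sin (x + (j - 1 / 2) * d) := by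
    rw [sin_sub_sin]
    congr 3 <;> push_cast <;> ring
  rw [mul_sum, sum_congr rfl fun j _ => hstep j,
    sum_range_sub fun j : ℕ => sin (x + (j - 1 / 2) * d)]
  simp only [CharP.cast_eq_zero, zero_sub, neg_mul, one_div, ← sub_eq_add_neg]
  ring_nf

theorem sin_add_sub_two_mul_sin_add_sin_sub (x t : ℝ) :
    sin (x + t) - 2 * sin x + sin (x - t) = -4 * sin (t / 2) ^ 2 * sin x := by
  have h := sin_sq_eq_half_sub (t / 2)
  rw [show 2 * (t / 2) = t by ring] at h
  rw [sin_add, sin_sub, h]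
  ring

theorem neg_one_pow_two_mul_sub_one_sub {n j : ℕ} (hj : j < 2 * n) :
    (-1 : ℝ) ^ (2 * n - 1 - j) = -(-1) ^ j := by
  rcases Nat.even_or_odd j with ⟨r, hr⟩ | ⟨r, hr⟩
  · rw [Even.neg_one_pow ⟨r, hr⟩, Odd.neg_one_pow ⟨n - 1 - r, by omega⟩]
  · rw [Odd.neg_one_pow ⟨r, hr⟩, Even.neg_one_pow ⟨n - 1 - r, by omega⟩, neg_neg]

noncomputable def rieszNode (n j : ℕ) : ℝ := (2 * j + 1) * π / (2 * n)

noncomputable def rieszWeight (n j : ℕ) : ℝ := (-1) ^ j / sin (rieszNode n j / 2) ^ 2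

section RieszNodes

variable {n : ℕ}

theorem sin_rieszNode_half_pos {j : ℕ} (hj : j < 2 * n) : 0 < sin (rieszNode n j / 2) := by
  have hn : (0 : ℝ) < n := by norm_cast; omega
  have hj' : (j : ℝ) + 1 ≤ 2 * n := by exact_mod_cast hj
  apply sin_pos_of_pos_of_lt_pi
  · unfold rieszNode; positivity
  · rw [rieszNode, div_div, div_lt_iff₀ (by positivity)]
    nlinarith [pi_pos]

theorem sin_nat_mul_rieszNode (hn : n ≠ 0) (j : ℕ) : sin (n * rieszNode n j) = (-1) ^ j := by
  have h : (n : ℝ) * rieszNode n j = π / 2 + j * π := by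
    unfold rieszNode; field_simp; ring
  rw [h, sin_add_nat_mul_pi, sin_pi_div_two, mul_one]

theorem rieszNode_two_mul_sub_one_sub {j : ℕ} (hj : j < 2 * n) :
    rieszNode n (2 * n - 1 - j) = 2 * π - rieszNode n j := by
  have hn : (n : ℝ) ≠ 0 := by norm_cast; omega
  rw [rieszNode, rieszNode, Nat.cast_sub (by omega), Nat.cast_sub (by omega)]
  push_cast
  field_simp
  ring

theorem sum_range_cos_mul_rieszNode {m : ℕ} (hm : ¬ 2 * n ∣ m) :
    ∑ j ∈ range (2 * n), cos (m * rieszNode n j) = 0 := by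
  rcases eq_or_ne n 0 with rfl | hn
  · simp
  have hn' : (n : ℝ) ≠ 0 := by exact_mod_cast hn
  have hsin : sin (m * π / n / 2) ≠ 0 := by
    rw [sin_ne_zero_iff]
    intro k hk
    field_simp at hk
    have hkm : k * n * 2 = (m : ℤ) := by exact_mod_cast hk
    exact hm (Int.natCast_dvd_natCast.mp ⟨k, by rw [← hkm]; push_cast; ring⟩)
  have hnode (j : ℕ) : m * rieszNode n j = m * π / n / 2 + j * (m * π / n) := by
    unfold rieszNode; field_simp; ring
  have htel := two_mul_sin_half_mul_sum_range_cos (2 * n) (m * π / n / 2) (m * π / n)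
  have hend :
      (m * π / n / 2 : ℝ) + ((2 * n : ℕ) - 1 / 2) * (m * π / n) = (2 * m : ℕ) * π := by
    push_cast; field_simp; ring
  rw [hend, sub_self, sin_zero, sin_nat_mul_pi, sub_zero] at htel
  simp only [hnode]
  simpa [hsin] using htel

theorem sum_range_neg_one_pow_mul_sin_mul_rieszNode (hn : n ≠ 0) {k : ℕ} (hk0 : 0 < k)
    (hk : k < n) : ∑ j ∈ range (2 * n), (-1) ^ j * sin (k * rieszNode n j) = 0 := by
  have hterm (j : ℕ) : (-1) ^ j * sin (k * rieszNode n j)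
      = (cos ((n - k : ℕ) * rieszNode n j) - cos ((n + k : ℕ) * rieszNode n j)) / 2 := by
    rw [← sin_nat_mul_rieszNode hn j, Nat.cast_sub hk.le, eq_div_iff two_ne_zero,
      mul_comm, ← mul_assoc, two_mul_sin_mul_sin]
    push_cast; ring_nf
  have hsub : ¬ 2 * n ∣ n - k := fun h => by have := Nat.le_of_dvd (by omega) h; omega
  have hadd : ¬ 2 * n ∣ n + k := fun h => by
    obtain ⟨c, hc⟩ := h
    rcases c with _ | _ | c <;> nlinarith
  simp only [hterm, ← sum_div, sum_sub_distrib, sum_range_cos_mul_rieszNode hsub,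
    sum_range_cos_mul_rieszNode hadd, sub_self, zero_div]

theorem sum_rieszWeight_mul_cos (k : ℕ) :
    ∑ j ∈ range (2 * n), rieszWeight n j * cos (k * rieszNode n j) = 0 := by
  have hodd : ∀ j ∈ range (2 * n),
      rieszWeight n (2 * n - 1 - j) * cos (k * rieszNode n (2 * n - 1 - j))
        = -(rieszWeight n j * cos (k * rieszNode n j)) := by
    intro j hj
    have hj := mem_range.mp hj
    have hsin : sin (rieszNode n (2 * n - 1 - j) / 2) = sin (rieszNode n j / 2) := by
      rw [rieszNode_two_mul_sub_one_sub hj,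
        show (2 * π - rieszNode n j) / 2 = π - rieszNode n j / 2 by ring, sin_pi_sub]
    have hcos : cos (k * rieszNode n (2 * n - 1 - j)) = cos (k * rieszNode n j) := by
      rw [rieszNode_two_mul_sub_one_sub hj, mul_sub, cos_nat_mul_two_pi_sub]
    rw [rieszWeight, rieszWeight, hsin, hcos, neg_one_pow_two_mul_sub_one_sub hj]
    ring
  have h := sum_range_reflect (fun j => rieszWeight n j * cos (k * rieszNode n j)) (2 * n)
  rw [sum_congr rfl hodd, sum_neg_distrib] at h
  linarith

theorem sum_rieszWeight_mul_sin_two_mul_sub {k : ℕ} (hk : k ≤ 2 * n) :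
    ∑ j ∈ range (2 * n), rieszWeight n j * sin ((2 * n - k : ℕ) * rieszNode n j)
      = ∑ j ∈ range (2 * n), rieszWeight n j * sin (k * rieszNode n j) := by
  refine sum_congr rfl fun j hj => ?_
  have hn : (n : ℝ) ≠ 0 := by have := mem_range.mp hj; norm_cast; omega
  have harg :
      ((2 * n - k : ℕ) : ℝ) * rieszNode n j = (2 * j + 1 : ℕ) * π - k * rieszNode n j := by
    rw [Nat.cast_sub hk, rieszNode]; push_cast; field_simp
  rw [harg, sin_nat_mul_pi_sub, Odd.neg_one_pow ⟨j, rfl⟩]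
  ring

theorem sum_rieszWeight_mul_sin_second_diff (k : ℕ) :
    ∑ j ∈ range (2 * n), rieszWeight n j * sin ((k + 2 : ℕ) * rieszNode n j)
      - 2 * ∑ j ∈ range (2 * n), rieszWeight n j * sin ((k + 1 : ℕ) * rieszNode n j)
      + ∑ j ∈ range (2 * n), rieszWeight n j * sin (k * rieszNode n j)
      = -4 * ∑ j ∈ range (2 * n), (-1) ^ j * sin ((k + 1 : ℕ) * rieszNode n j) := by
  rw [mul_sum, mul_sum, ← sum_sub_distrib, ← sum_add_distrib]
  refine sum_congr rfl fun j hj => ?_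
  have hs := (sin_rieszNode_half_pos (mem_range.mp hj)).ne'
  have h := sin_add_sub_two_mul_sin_add_sin_sub ((k + 1 : ℕ) * rieszNode n j) (rieszNode n j)
  rw [show ((k + 1 : ℕ) : ℝ) * rieszNode n j + rieszNode n j = (k + 2 : ℕ) * rieszNode n j by
      push_cast; ring,
    show ((k + 1 : ℕ) : ℝ) * rieszNode n j - rieszNode n j = k * rieszNode n j by
      push_cast; ring] at h
  calc _ = (-1) ^ j / sin (rieszNode n j / 2) ^ 2 * (sin ((k + 2 : ℕ) * rieszNode n j)
        - 2 * sin ((k + 1 : ℕ) * rieszNode n j) + sin (k * rieszNode n j)) := by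
        rw [rieszWeight]; ring
    _ = _ := by rw [h]; field_simp

/- The second differences of `k ↦ ∑ w_j sin (k t_j)` vanish for `0 < k < n`, so it is linear on
`[0, n]`; its symmetry about `n` then fixes the slope via the second difference at `n`. -/
theorem sum_rieszWeight_mul_sin (hn : n ≠ 0) {k : ℕ} (hk : k ≤ n) :
    ∑ j ∈ range (2 * n), rieszWeight n j * sin (k * rieszNode n j) = 4 * n * k := by
  obtain ⟨S, hS⟩ : ∃ S : ℕ → ℝ, ∀ k : ℕ,
      S k = ∑ j ∈ range (2 * n), rieszWeight n j * sin (k * rieszNode n j) :=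
    ⟨_, fun _ => rfl⟩
  have hsecond (k : ℕ) : S (k + 2) - 2 * S (k + 1) + S k
      = -4 * ∑ j ∈ range (2 * n), (-1) ^ j * sin ((k + 1 : ℕ) * rieszNode n j) := by
    simpa only [hS] using sum_rieszWeight_mul_sin_second_diff k
  have hstep (k : ℕ) (hk : k < n) : S (k + 1) - S k = S 1 := by
    induction k with
    | zero => simp [hS]
    | succ k ih =>
      have h := hsecond k
      rw [sum_range_neg_one_pow_mul_sin_mul_rieszNode hn k.succ_pos hk] at h
      linarith [ih (by omega)]
  have hlinear (k : ℕ) (hk : k ≤ n) : S k = k * S 1 := by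
    induction k with
    | zero => simp [hS]
    | succ k ih => push_cast; linarith [ih (by omega), hstep k hk]
  obtain ⟨m, rfl⟩ : ∃ m, n = m + 1 := Nat.exists_eq_add_one.mpr (Nat.pos_of_ne_zero hn)
  have hcenter : ∑ j ∈ range (2 * (m + 1)), (-1) ^ j * sin ((m + 1 : ℕ) * rieszNode (m + 1) j)
      = 2 * (m + 1 : ℕ) := by
    simp only [sin_nat_mul_rieszNode hn, ← mul_pow]
    norm_num
  have hreflect : S (m + 2) = S m := by
    have h := sum_rieszWeight_mul_sin_two_mul_sub (n := m + 1) (k := m) (by omega)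
    rwa [show 2 * (m + 1) - m = m + 2 by omega, ← hS, ← hS] at h
  have h := hsecond m
  rw [hcenter, hreflect, hlinear m (by omega), hlinear (m + 1) le_rfl] at h
  have hS1 : S 1 = 4 * (m + 1 : ℕ) := by push_cast at h ⊢; linarith
  rw [← hS, hlinear k hk, hS1]
  ring

end RieszNodes

theorem sum_rieszWeight_mul_trigPoly {n : ℕ} (hn : n ≠ 0) (a b : ℕ → ℝ) (θ : ℝ) :
    ∑ j ∈ range (2 * n), rieszWeight n j * trigPoly n a b (θ + rieszNode n j)
      = 4 * n * ∑ k ∈ Icc 1 n, k * (b k * cos (k * θ) - a k * sin (k * θ)) := by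
  have hconst := sum_rieszWeight_mul_cos (n := n) 0
  simp only [CharP.cast_eq_zero, zero_mul, cos_zero, mul_one] at hconst
  rw [sum_congr rfl fun j _ => by rw [trigPoly_add, mul_add, mul_sum], sum_add_distrib,
    ← sum_mul, hconst, zero_mul, zero_add, sum_comm, mul_sum]
  refine sum_congr rfl fun k hk => ?_
  have hsin := sum_rieszWeight_mul_sin hn (mem_Icc.mp hk).2
  calc _ = (a k * cos (k * θ) + b k * sin (k * θ))
          * ∑ j ∈ range (2 * n), rieszWeight n j * cos (k * rieszNode n j)
        + (b k * cos (k * θ) - a k * sin (k * θ))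
          * ∑ j ∈ range (2 * n), rieszWeight n j * sin (k * rieszNode n j) := by
        simp only [mul_sum, ← sum_add_distrib]; exact sum_congr rfl fun j _ => by ring
    _ = _ := by rw [sum_rieszWeight_mul_cos, hsin]; ring

theorem sum_abs_rieszWeight {n : ℕ} (hn : n ≠ 0) :
    ∑ j ∈ range (2 * n), |rieszWeight n j| = 4 * n ^ 2 := by
  have habs (j : ℕ) : |rieszWeight n j| = rieszWeight n j * sin (n * rieszNode n j) := by
    rw [sin_nat_mul_rieszNode hn, rieszWeight, abs_div, abs_pow, abs_neg, abs_one, one_pow,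
      abs_sq, div_mul_eq_mul_div, ← pow_add, Even.neg_one_pow ⟨j, rfl⟩]
  simp only [habs, sum_rieszWeight_mul_sin hn le_rfl]
  ring

/-- Bernstein's inequality for trigonometric polynomials:
if `T(t) = a₀ + ∑_{k=1}^n (aₖ cos(kt) + bₖ sin(kt))`, then
`|T'(θ)| ≤ n · sup_t |T(t)|` for every real `θ`. -/
theorem bernstein_trig_inequality (n : ℕ) (a b : ℕ → ℝ) (T : ℝ → ℝ)
    (hT : ∀ t : ℝ, T t =
      a 0 + ∑ k ∈ Finset.Icc 1 n, (a k * Real.cos (k * t) + b k * Real.sin (k * t)))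
    (θ : ℝ) :
    |deriv T θ| ≤ (n : ℝ) * ⨆ t : ℝ, |T t| := by
  obtain rfl : T = trigPoly n a b := funext hT
  rcases eq_or_ne n 0 with rfl | hn
  · simp [(hasDerivAt_trigPoly 0 a b θ).deriv]
  set M := ⨆ t : ℝ, |trigPoly n a b t|
  have hM (t : ℝ) : |trigPoly n a b t| ≤ M := le_ciSup (bddAbove_range_abs_trigPoly n a b) t
  have hriesz : 4 * n * deriv (trigPoly n a b) θ
      = ∑ j ∈ range (2 * n), rieszWeight n j * trigPoly n a b (θ + rieszNode n j) := by
    rw [(hasDerivAt_trigPoly n a b θ).deriv, sum_rieszWeight_mul_trigPoly hn]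
  have hbound : 4 * n * |deriv (trigPoly n a b) θ| ≤ 4 * n * (n * M) :=
    calc 4 * n * |deriv (trigPoly n a b) θ|
        = |∑ j ∈ range (2 * n), rieszWeight n j * trigPoly n a b (θ + rieszNode n j)| := by
          rw [← hriesz, abs_mul, abs_of_nonneg (by positivity : (0 : ℝ) ≤ 4 * n)]
      _ ≤ ∑ j ∈ range (2 * n), |rieszWeight n j| * M := by
          refine (abs_sum_le_sum_abs _ _).trans (sum_le_sum fun j _ => ?_)
          rw [abs_mul]
          exact mul_le_mul_of_nonneg_left (hM _) (abs_nonneg _)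
      _ = 4 * n * (n * M) := by rw [← sum_mul, sum_abs_rieszWeight hn]; ring
  exact le_of_mul_le_mul_left hbound (by positivity)
end

section
/- Let a < b be real numbers and let P be a real algebraic polynomial of degree at most n ≥ 1. Then sup_{x∈[a,b]} |P'(x)| ≤ (2n²/(b−a)) · sup_{x∈[a,b]} |P(x)| (Markov's inequality on an arbitrary interval). -/
/-!
Bernstein's inequality: a real trigonometric polynomial `f` of degree `n` with
`|f| < 1` satisfies `f' ≤ n`. Otherwise, for a suitable phase `β`, the trigonometric polynomial
`f θ - cos (n θ + β)` vanishes at `θ₀`, is positive just after `θ₀`, and alternates in sign at the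
`2n` points of the next period where `cos (n θ + β) = ±1`; this produces `2n + 1` zeros in one
period, which is too many. Applied to `θ ↦ P (cos θ)` it gives `|P'(x)| √(1 - x²) ≤ n ‖P‖`.

For `|x| ≤ cos (π / 2n)` this already yields `|P'(x)| ≤ n² ‖P‖`, since then `√(1 - x²) ≥ 1 / n`.
To the right of all zeros `x_i` of the Chebyshev polynomial `T_n`, interpolate `P'` at them:
`P'(x) = ∑ P'(x_i) / ω'(x_i) · ∏_{j ≠ i} (x - x_j)` with `ω = ∏ (X - x_i)`, a multiple of `T_n`,
and the products are nonnegative with sum `ω'(x)`. Since `|T_n'(cos θ) sin θ| = n` at the zeros,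
Bernstein's inequality there reads `|P'(x_i)| ≤ ‖P‖ |T_n'(x_i)|`, and so
`|P'(x)| ≤ ‖P‖ |T_n'(x)| ≤ n² ‖P‖`.
The left end follows by symmetry and a general interval by an affine change of variables.
-/

open Real Set Polynomial Finset

theorem exists_mem_Ioo_eq_zero_of_mul_neg {h : ℝ → ℝ} {a b : ℝ} (hab : a ≤ b)
    (hh : ContinuousOn h (Icc a b)) (hsign : h a * h b < 0) : ∃ z ∈ Ioo a b, h z = 0 := by
  rcases mul_neg_iff.1 hsign with ⟨ha, hb⟩ | ⟨ha, hb⟩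
  · exact intermediate_value_Ioo' hab hh ⟨hb, ha⟩
  · exact intermediate_value_Ioo hab hh ⟨ha, hb⟩

theorem exists_mem_Ioo_pos_of_deriv_pos {g : ℝ → ℝ} {a b : ℝ} (hab : a < b) (hg : g a = 0)
    (hderiv : 0 < deriv g a) : ∃ u ∈ Ioo a b, 0 < g u := by
  obtain ⟨u, hu_sign, hu⟩ := (((eventually_nhdsWithin_sign_eq_of_deriv_pos hderiv hg).filter_mono
    nhdsWithin_le_nhds).and (Ioo_mem_nhdsGT hab)).exists
  exact ⟨u, hu, sign_eq_one_iff.1 (hu_sign.trans (sign_eq_one_iff.2 (sub_pos.2 hu.1)))⟩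

theorem Real.inv_natCast_le_sin {n : ℕ} (hn : 0 < n) {θ : ℝ} (hθ : π / (2 * n) ≤ θ)
    (hθ' : θ ≤ π / 2) : (n : ℝ)⁻¹ ≤ sin θ := by
  have hθ₀ : 0 ≤ θ := (by positivity : (0 : ℝ) ≤ π / (2 * n)).trans hθ
  calc (n : ℝ)⁻¹ = 2 / π * (π / (2 * n)) := by field_simp
    _ ≤ 2 / π * θ := by gcongr
    _ ≤ sin θ := mul_le_sin hθ₀ hθ'

/-- Real trigonometric polynomials of degree at most `n`: `f` is one iff `e^{inθ} f(θ)` is a complex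
polynomial of degree at most `2n` in `e^{iθ}`. -/
def trigPolynomialDegreeLE (n : ℕ) : Submodule ℝ (ℝ → ℝ) where
  carrier := {f | ∃ r : ℂ[X], r.natDegree ≤ 2 * n ∧
    ∀ θ : ℝ, r.eval (Circle.exp θ : ℂ) = (Circle.exp θ : ℂ) ^ n * f θ}
  zero_mem' := ⟨0, by simp⟩
  add_mem' := by
    rintro f g ⟨r, hr, hrf⟩ ⟨q, hq, hqg⟩
    refine ⟨r + q, (natDegree_add_le _ _).trans (max_le hr hq), fun θ => ?_⟩
    rw [eval_add, hrf, hqg, Pi.add_apply]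
    push_cast
    ring
  smul_mem' := by
    rintro c f ⟨r, hr, hrf⟩
    refine ⟨C (c : ℂ) * r, (natDegree_C_mul_le _ _).trans hr, fun θ => ?_⟩
    rw [eval_mul, eval_C, hrf]
    push_cast [Pi.smul_apply, smul_eq_mul]
    ring

namespace trigPolynomialDegreeLE

variable {m n : ℕ} {f g : ℝ → ℝ}

theorem mem_iff : f ∈ trigPolynomialDegreeLE n ↔ ∃ r : ℂ[X], r.natDegree ≤ 2 * n ∧
    ∀ θ : ℝ, r.eval (Circle.exp θ : ℂ) = (Circle.exp θ : ℂ) ^ n * f θ :=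
  Iff.rfl

theorem mul_mem (hf : f ∈ trigPolynomialDegreeLE m) (hg : g ∈ trigPolynomialDegreeLE n) :
    f * g ∈ trigPolynomialDegreeLE (m + n) := by
  obtain ⟨r, hr, hrf⟩ := mem_iff.1 hf
  obtain ⟨q, hq, hqg⟩ := mem_iff.1 hg
  refine mem_iff.2 ?_
  refine ⟨r * q, natDegree_mul_le.trans (by omega), fun θ => ?_⟩
  simp only [eval_mul, hrf, hqg, Pi.mul_apply, Complex.ofReal_mul]
  ring

theorem mono (hmn : m ≤ n) : trigPolynomialDegreeLE m ≤ trigPolynomialDegreeLE n := by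
  intro f hf
  obtain ⟨r, hr, hrf⟩ := mem_iff.1 hf
  refine mem_iff.2 ⟨X ^ (n - m) * r, natDegree_mul_le.trans ?_, fun θ => ?_⟩
  · rw [natDegree_X_pow]; omega
  · rw [eval_mul, hrf, eval_pow, eval_X, ← mul_assoc, pow_sub_mul_pow _ hmn]

theorem one_mem : (1 : ℝ → ℝ) ∈ trigPolynomialDegreeLE 0 :=
  mem_iff.2 ⟨1, by simp, fun θ => by simp⟩

theorem pow_mem (hf : f ∈ trigPolynomialDegreeLE 1) (k : ℕ) : f ^ k ∈ trigPolynomialDegreeLE k := by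
  induction k with
  | zero => simpa using one_mem
  | succ k ih => simpa [pow_succ] using mul_mem ih hf

theorem cos_mem : cos ∈ trigPolynomialDegreeLE 1 := by
  refine mem_iff.2 ⟨C (1 / 2) * (X ^ 2 + 1), ?_, fun θ => ?_⟩
  · refine (natDegree_C_mul_le _ _).trans ?_
    rw [natDegree_add_eq_left_of_natDegree_lt] <;> simp
  · simp only [eval_mul, eval_C, eval_add, eval_pow, eval_X, eval_one, Circle.coe_exp,
      Complex.ofReal_cos, Complex.cos, pow_one]
    rw [show (-(θ : ℂ) * Complex.I) = -((θ : ℂ) * Complex.I) by ring, Complex.exp_neg]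
    field_simp

theorem cos_mul_add_mem (n : ℕ) (γ : ℝ) :
    (fun θ => cos (n * θ + γ)) ∈ trigPolynomialDegreeLE n := by
  refine mem_iff.2 ⟨C (Complex.exp (γ * Complex.I) / 2) * X ^ (2 * n) +
    C (Complex.exp (-γ * Complex.I) / 2), ?_, fun θ => ?_⟩
  · refine (natDegree_add_le _ _).trans (max_le ((natDegree_C_mul_le _ _).trans ?_) ?_) <;> simp
  · simp only [eval_add, eval_mul, eval_C, eval_pow, eval_X, Circle.coe_exp,
      Complex.ofReal_cos, Complex.cos]
    push_cast
    rw [← Complex.exp_nat_mul, ← Complex.exp_nat_mul]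
    have h₁ : Complex.exp (n * (θ * Complex.I)) * Complex.exp ((n * θ + γ) * Complex.I) =
        Complex.exp (γ * Complex.I) * Complex.exp ((2 * n : ℕ) * (θ * Complex.I)) := by
      rw [← Complex.exp_add, ← Complex.exp_add]; push_cast; ring_nf
    have h₂ : Complex.exp (n * (θ * Complex.I)) * Complex.exp (-(n * θ + γ) * Complex.I) =
        Complex.exp (-γ * Complex.I) := by
      rw [← Complex.exp_add]; ring_nf
    linear_combination (-(h₁ + h₂)) / 2

theorem eval_cos_mem {P : ℝ[X]} (hP : P.natDegree ≤ n) :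
    (fun θ => P.eval (cos θ)) ∈ trigPolynomialDegreeLE n := by
  have hsum : (fun θ => P.eval (cos θ)) = ∑ k ∈ range (n + 1), P.coeff k • cos ^ k := by
    ext θ
    rw [eval_eq_sum_range' (Nat.lt_succ_of_le hP), Finset.sum_apply]
    simp
  rw [hsum]
  exact Submodule.sum_mem _ fun k hk =>
    Submodule.smul_mem _ _ (mono (by simpa [Nat.lt_succ_iff] using hk) (pow_mem cos_mem k))

theorem continuous_of_mem (hf : f ∈ trigPolynomialDegreeLE n) : Continuous f := by
  obtain ⟨r, -, hrf⟩ := mem_iff.1 hf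
  have hf_eq : f = fun θ => (((Circle.exp θ : ℂ) ^ n)⁻¹ * r.eval (Circle.exp θ : ℂ)).re := by
    ext θ
    rw [hrf, inv_mul_cancel_left₀ (pow_ne_zero _ (Circle.coe_ne_zero _)), Complex.ofReal_re]
  rw [hf_eq]
  have hexp : Continuous fun θ : ℝ => (Circle.exp θ : ℂ) :=
    continuous_subtype_val.comp Circle.exp.continuous
  exact Complex.continuous_re.comp (((hexp.pow n).inv₀ fun θ => pow_ne_zero _
    (Circle.coe_ne_zero _)).mul (r.continuous.comp hexp))

theorem eq_zero_of_card_zeros_lt (hf : f ∈ trigPolynomialDegreeLE n) {a : ℝ} {Z : Finset ℝ}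
    (hZ : (Z : Set ℝ) ⊆ Ico a (a + 2 * π)) (hcard : 2 * n < #Z) (hzero : ∀ θ ∈ Z, f θ = 0) :
    f = 0 := by
  obtain ⟨r, hr, hrf⟩ := mem_iff.1 hf
  have hinj : InjOn (fun θ => (Circle.exp θ : ℂ)) Z :=
    (Subtype.val_injective.comp_injOn (Circle.exp_injOn_Ico (by linarith))).mono hZ
  have hr0 : r = 0 := by
    refine eq_zero_of_natDegree_lt_card_of_eval_eq_zero' r (Z.image fun θ => (Circle.exp θ : ℂ))
      ?_ (by rw [card_image_of_injOn hinj]; omega)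
    intro z hz
    obtain ⟨θ, hθ, rfl⟩ := mem_image.1 hz
    rw [hrf, hzero θ hθ, Complex.ofReal_zero, mul_zero]
  ext θ
  have hθ := hrf θ
  rw [hr0, eval_zero, zero_eq_mul] at hθ
  exact_mod_cast hθ.resolve_left (pow_ne_zero _ (Circle.coe_ne_zero _))

theorem eq_zero_of_alternating (hf : f ∈ trigPolynomialDegreeLE n) {θ₀ : ℝ} {s : ℕ → ℝ}
    (hs : StrictMono s) (hθ₀ : θ₀ < s 0) (hs_lt : s (2 * n) < θ₀ + 2 * π) (hfθ₀ : f θ₀ = 0)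
    (hsign : ∀ j ≤ 2 * n, 0 < (-1) ^ j * f (s j)) : f = 0 := by
  have hzeros : ∀ j < 2 * n, ∃ z ∈ Ioo (s j) (s (j + 1)), f z = 0 := by
    intro j hj
    refine exists_mem_Ioo_eq_zero_of_mul_neg (hs j.lt_succ_self).le
      (continuous_of_mem hf).continuousOn ?_
    have hprod := mul_pos (hsign j hj.le) (hsign (j + 1) hj)
    have hsq : ((-1 : ℝ) ^ j) ^ 2 = 1 := by
      rw [← pow_mul, mul_comm, pow_mul, neg_one_sq, one_pow]
    linear_combination hprod - f (s j) * f (s (j + 1)) * hsq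
  choose! z hz hz0 using hzeros
  have hz_mono : StrictMonoOn z (Finset.range (2 * n)) := fun j hj k hk hjk =>
    ((hz j (by simpa using hj)).2.trans_le (hs.monotone hjk)).trans (hz k (by simpa using hk)).1
  have hθ₀_notMem : θ₀ ∉ (range (2 * n)).image z := by
    simp only [Finset.mem_image, Finset.mem_range, not_exists, not_and]
    exact fun j hj => ((hθ₀.trans_le (hs.monotone j.zero_le)).trans (hz j hj).1).ne'
  refine eq_zero_of_card_zeros_lt hf (a := θ₀) (Z := insert θ₀ ((range (2 * n)).image z))
    ?_ ?_ ?_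
  · intro x hx
    rcases Finset.mem_insert.1 hx with rfl | hx
    · exact ⟨le_rfl, by linarith [Real.pi_pos]⟩
    · obtain ⟨j, hj, rfl⟩ := Finset.mem_image.1 hx
      rw [Finset.mem_range] at hj
      exact ⟨((hθ₀.trans_le (hs.monotone j.zero_le)).trans (hz j hj).1).le,
        ((hz j hj).2.trans_le (hs.monotone hj)).trans hs_lt⟩
  · rw [card_insert_of_notMem hθ₀_notMem, card_image_of_injOn hz_mono.injOn, card_range]
    omega
  · intro x hx
    rcases Finset.mem_insert.1 hx with rfl | hx
    · exact hfθ₀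
    · obtain ⟨j, hj, rfl⟩ := Finset.mem_image.1 hx
      exact hz0 j (Finset.mem_range.1 hj)

theorem deriv_le_of_abs_lt_one (hn : 0 < n) (hf : f ∈ trigPolynomialDegreeLE n)
    (hf_lt : ∀ θ, |f θ| < 1) (θ₀ : ℝ) : deriv f θ₀ ≤ n := by
  by_contra! hlt
  have hn' : (0 : ℝ) < n := Nat.cast_pos.2 hn
  obtain ⟨hf₁, hf₂⟩ := abs_lt.1 (hf_lt θ₀)
  set α := -arccos (f θ₀)
  have hα_neg : α < 0 := neg_lt_zero.2 (arccos_pos.2 hf₂)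
  have hα_gt : -π < α := neg_lt_neg (arccos_lt_pi.2 hf₁)
  -- `g θ₀ = 0`, and `α ∈ (-π, 0)` leaves room for `2n` sign changes of `g` after `θ₀`
  set β := α - n * θ₀
  set g : ℝ → ℝ := fun θ => f θ - cos (n * θ + β)
  have hg₀ : g θ₀ = 0 := by
    simp only [g, β, add_sub_cancel, α, cos_neg, cos_arccos hf₁.le hf₂.le, sub_self]
  have hg_deriv : 0 < deriv g θ₀ := by
    have hcos : HasDerivAt (fun θ => cos (n * θ + β)) (-sin (n * θ₀ + β) * n) θ₀ :=
      (((hasDerivAt_id θ₀).const_mul (n : ℝ)).add_const β).cos.congr_deriv (by simp)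
    have hg : HasDerivAt g (deriv f θ₀ - -sin (n * θ₀ + β) * n) θ₀ :=
      (differentiableAt_of_deriv_ne_zero (by linarith)).hasDerivAt.sub hcos
    rw [hg.deriv]
    nlinarith [neg_one_le_sin (n * θ₀ + β)]
  set t : ℕ → ℝ := fun j => ((j - 1) * π - β) / n
  have hcos_t : ∀ j, cos (n * t j + β) = -(-1) ^ j := fun j => by
    rw [mul_div_cancel₀ _ hn'.ne', sub_add_cancel, sub_one_mul, cos_sub_pi, cos_nat_mul_pi]
  have ht_mono : ∀ j, t j < t (j + 1) := fun j => by
    simp only [t]; gcongr; linarith [pi_pos]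
  have hθ₀_lt : θ₀ < t 1 := by
    simp only [t, β]; rw [lt_div_iff₀ hn']; push_cast; linarith
  obtain ⟨u, hu, hgu⟩ := exists_mem_Ioo_pos_of_deriv_pos hθ₀_lt hg₀ hg_deriv
  set s : ℕ → ℝ := fun j => if j = 0 then u else t j
  have hs_mono : StrictMono s := strictMono_nat_of_lt_succ fun j => by
    rcases j.eq_zero_or_pos with rfl | hj
    · simpa [s] using hu.2
    · simpa [s, hj.ne'] using ht_mono j
  have hs_lt : s (2 * n) < θ₀ + 2 * π := by
    simp only [s, t, β, if_neg (by omega : 2 * n ≠ 0)]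
    rw [div_lt_iff₀ hn']; push_cast; linarith
  have hs_sign : ∀ j ≤ 2 * n, 0 < (-1) ^ j * g (s j) := by
    intro j _
    rcases j.eq_zero_or_pos with rfl | hj
    · simpa [s] using hgu
    · have hf_t := abs_lt.1 (hf_lt (t j))
      simp only [s, if_neg hj.ne', g, hcos_t]
      rcases neg_one_pow_eq_or ℝ j with h | h <;> rw [h] <;> linarith
  have hg_zero := eq_zero_of_alternating (sub_mem hf (cos_mul_add_mem n β)) hs_mono hu.1 hs_lt
    hg₀ hs_sign
  exact hgu.ne' (congrFun hg_zero u)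

theorem abs_deriv_le (hn : 0 < n) (hf : f ∈ trigPolynomialDegreeLE n) {S : ℝ}
    (hS : ∀ θ, |f θ| ≤ S) (θ : ℝ) : |deriv f θ| ≤ n * S := by
  have hn' : (0 : ℝ) < n := Nat.cast_pos.2 hn
  refine le_of_forall_pos_le_add fun ε hε => ?_
  have hSε : 0 < S + ε / n := by linarith [(abs_nonneg _).trans (hS 0), div_pos hε hn']
  have hscaled : ∀ d : ℝ, |d| = (S + ε / n)⁻¹ → d * deriv f θ ≤ n := fun d hd => by
    have hd_lt : ∀ x, |(d • f) x| < 1 := fun x => by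
      rw [Pi.smul_apply, smul_eq_mul, abs_mul, hd, inv_mul_lt_one₀ hSε]
      linarith [hS x, div_pos hε hn']
    have h := deriv_le_of_abs_lt_one hn (Submodule.smul_mem _ d hf) hd_lt θ
    rwa [show d • f = fun x => d * f x from rfl, deriv_const_mul_field'] at h
  have h₁ := hscaled _ (abs_of_pos (inv_pos.2 hSε))
  have h₂ := hscaled _ ((abs_neg _).trans (abs_of_pos (inv_pos.2 hSε)))
  rw [inv_mul_le_iff₀ hSε] at h₁
  rw [neg_mul, ← mul_neg, inv_mul_le_iff₀ hSε] at h₂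
  have hbound : (S + ε / n) * n = n * S + ε := by field_simp
  exact abs_le.2 ⟨by linarith, by linarith⟩

end trigPolynomialDegreeLE

theorem Lagrange.abs_eval_le_mul_eval_derivative_nodal {ι : Type*} [DecidableEq ι] {s : Finset ι}
    {v : ι → ℝ} (hv : InjOn v s) {q : ℝ[X]} (hq : q.degree < #s) {M y : ℝ}
    (hqv : ∀ i ∈ s, |q.eval (v i)| ≤ M * |(derivative (nodal s v)).eval (v i)|)
    (hy : ∀ i ∈ s, v i ≤ y) :
    |q.eval y| ≤ M * (derivative (nodal s v)).eval y := by
  -- the `i`-th Lagrange basis polynomial is `nodal (s.erase i) v` scaled by `1 / (nodal s v)'(v i)`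
  have hnodal : ∀ i ∈ s, 0 ≤ (nodal (s.erase i) v).eval y := fun i _ => by
    rw [eval_nodal]
    exact prod_nonneg fun j hj => sub_nonneg.2 (hy j (mem_of_mem_erase hj))
  rw [derivative_nodal, eval_finsetSum, mul_sum, eq_interpolate hv hq, interpolate_apply,
    eval_finsetSum]
  refine (abs_sum_le_sum_abs _ _).trans (sum_le_sum fun i hi => ?_)
  rw [eval_mul, eval_C, basis_eq_prod_sub_inv_mul_nodal_div hi, ← nodal_erase_eq_nodal_div hi,
    eval_mul, eval_C, ← mul_assoc, abs_mul, abs_of_nonneg (hnodal i hi)]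
  refine mul_le_mul_of_nonneg_right ?_ (hnodal i hi)
  have hw := nodalWeight_ne_zero hv hi
  rw [nodalWeight_eq_eval_derivative_nodal hi] at hw ⊢
  rw [abs_mul, abs_inv, ← div_eq_mul_inv, div_le_iff₀ (abs_pos.2 (by simpa using hw))]
  exact hqv i hi

namespace Polynomial.Chebyshev

theorem eval_derivative_T_real_cos_mul_sin (n : ℤ) (θ : ℝ) :
    (derivative (T ℝ n)).eval (cos θ) * sin θ = n * sin (n * θ) := by
  rw [T_derivative_eq_U, eval_mul, eval_intCast, mul_assoc, U_real_cos]
  push_cast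
  ring_nf

theorem T_real_eq_C_leadingCoeff_mul_nodal (n : ℕ) :
    T ℝ n = Polynomial.C (T ℝ n).leadingCoeff *
      Lagrange.nodal (range n) (fun k : ℕ => cos ((2 * k + 1) * π / (2 * n))) := by
  have hinj := (range n).nodup_map_iff_injOn.mp (roots_T_real_nodup n)
  have hcard : Multiset.card (T ℝ n).roots = (T ℝ n).natDegree := by
    rw [roots_T_real, Finset.card_val, card_image_of_injOn hinj, card_range, natDegree_T]
    rfl
  conv_lhs => rw [← C_leadingCoeff_mul_prod_multiset_X_sub_C hcard]
  rw [roots_T_real, ← Finset.prod_eq_multiset_prod, prod_image hinj, Lagrange.nodal]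

end Polynomial.Chebyshev

namespace Polynomial

variable {n : ℕ} {P : ℝ[X]} {S : ℝ}

theorem abs_eval_derivative_cos_mul_sin_le (hn : 0 < n) (hP : P.degree ≤ n)
    (hS : ∀ x ∈ Icc (-1 : ℝ) 1, |P.eval x| ≤ S) (θ : ℝ) :
    |(derivative P).eval (cos θ) * sin θ| ≤ n * S := by
  have hderiv : deriv (fun θ => P.eval (cos θ)) θ = -((derivative P).eval (cos θ) * sin θ) :=
    ((P.hasDerivAt (cos θ)).comp θ (hasDerivAt_cos θ)).deriv.trans (by ring)
  rw [← abs_neg, ← hderiv]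
  exact trigPolynomialDegreeLE.abs_deriv_le hn
    (trigPolynomialDegreeLE.eval_cos_mem (natDegree_le_of_degree_le hP))
    (fun θ => hS _ ⟨neg_one_le_cos θ, cos_le_one θ⟩) θ

theorem degree_derivative_lt_of_degree_le (hP : P.degree ≤ n) :
    (derivative P).degree < n := by
  rcases eq_or_ne P 0 with rfl | hP0
  · simp
  · exact (degree_derivative_lt hP0).trans_le hP

open _root_.Polynomial.Chebyshev in
theorem abs_eval_derivative_le_of_abs_sin_eq_one (hn : 0 < n) (hP : P.degree ≤ n)
    (hS : ∀ x ∈ Icc (-1 : ℝ) 1, |P.eval x| ≤ S) {θ : ℝ} (hθ : |sin (n * θ)| = 1) :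
    |(derivative P).eval (cos θ)| ≤ S * |(derivative (T ℝ n)).eval (cos θ)| := by
  have hT : |(derivative (T ℝ n)).eval (cos θ)| * |sin θ| = n := by
    rw [← abs_mul, eval_derivative_T_real_cos_mul_sin, abs_mul, Int.cast_natCast, hθ, mul_one,
      Nat.abs_cast]
  have hsin : 0 < |sin θ| := abs_pos.2 fun h => by
    rw [h, abs_zero, mul_zero] at hT
    exact hn.ne (by exact_mod_cast hT)
  have hB := abs_eval_derivative_cos_mul_sin_le hn hP hS θ
  rw [abs_mul] at hB
  refine le_of_mul_le_mul_right (a := |sin θ|) ?_ hsin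
  rwa [mul_assoc, hT, mul_comm S]

open _root_.Polynomial.Chebyshev in
theorem abs_eval_derivative_le_of_cos_le (hn : 0 < n) (hP : P.degree ≤ n)
    (hS : ∀ x ∈ Icc (-1 : ℝ) 1, |P.eval x| ≤ S) {y : ℝ} (hy : cos (π / (2 * n)) ≤ y)
    (hy₁ : y ≤ 1) : |(derivative P).eval y| ≤ n ^ 2 * S := by
  set v : ℕ → ℝ := fun k => cos ((2 * k + 1) * π / (2 * n))
  set ω := Lagrange.nodal (range n) v
  set c := (T ℝ n).leadingCoeff
  have habs_T : ∀ x, |(derivative (T ℝ n)).eval x| = |c| * |(derivative ω).eval x| := fun x => by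
    rw [← abs_mul, ← eval_C (a := c) (x := x), ← eval_mul, ← derivative_C_mul,
      ← T_real_eq_C_leadingCoeff_mul_nodal]
  have hnodes : ∀ i ∈ range n,
      |(derivative P).eval (v i)| ≤ S * |c| * |(derivative ω).eval (v i)| := by
    intro i _
    rw [mul_assoc, ← habs_T]
    refine abs_eval_derivative_le_of_abs_sin_eq_one hn hP hS ?_
    rw [show (n : ℝ) * ((2 * i + 1) * π / (2 * n)) = i * π + π / 2 by field_simp,
      sin_add_pi_div_two, cos_nat_mul_pi, abs_pow, abs_neg, abs_one, one_pow]
  have hS₀ : 0 ≤ S := (abs_nonneg _).trans (hS 0 ⟨by norm_num, by norm_num⟩)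
  have hvy : ∀ i ∈ range n, v i ≤ y := fun i hi => by
    refine le_trans (cos_le_cos_of_nonneg_of_le_pi (by positivity) ?_ ?_) hy
    · have hi : (i : ℝ) + 1 ≤ n := by exact_mod_cast Finset.mem_range.1 hi
      rw [div_le_iff₀ (by positivity)]
      nlinarith [pi_pos]
    · gcongr
      exact le_mul_of_one_le_left pi_pos.le (by linarith [(Nat.cast_nonneg i : (0 : ℝ) ≤ i)])
  calc |(derivative P).eval y| ≤ S * |c| * (derivative ω).eval y :=
        Lagrange.abs_eval_le_mul_eval_derivative_nodal
          ((range n).nodup_map_iff_injOn.mp (roots_T_real_nodup n))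
          (by simpa using degree_derivative_lt_of_degree_le hP) hnodes hvy
    _ ≤ S * (|c| * |(derivative ω).eval y|) := by
        rw [mul_assoc]; gcongr; exact le_abs_self _
    _ = S * |(derivative (T ℝ n)).eval y| := by rw [habs_T]
    _ ≤ S * n ^ 2 := by
        gcongr
        have hy₀ : -1 ≤ y := (neg_one_le_cos _).trans hy
        simpa [derivative_T_eval_one] using
          abs_iterate_derivative_T_real_le n 1 (abs_le.2 ⟨hy₀, hy₁⟩)
    _ = n ^ 2 * S := mul_comm _ _

theorem abs_eval_derivative_le_sq_mul (hP : P.degree ≤ n)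
    (hS : ∀ x ∈ Icc (-1 : ℝ) 1, |P.eval x| ≤ S) {x : ℝ} (hx : x ∈ Icc (-1 : ℝ) 1) :
    |(derivative P).eval x| ≤ n ^ 2 * S := by
  rcases n.eq_zero_or_pos with rfl | hn
  · simp [derivative_of_natDegree_zero (Nat.le_zero.1 (natDegree_le_of_degree_le hP))]
  wlog hx₀ : 0 ≤ x generalizing P x
  · have hQ : (P.comp (-X)).degree ≤ n := degree_le_of_natDegree_le
      (natDegree_comp_le.trans (by simpa using natDegree_le_of_degree_le hP))
    have hneg : ∀ x ∈ Icc (-1 : ℝ) 1, -x ∈ Icc (-1 : ℝ) 1 := fun x hx =>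
      ⟨by linarith [hx.2], by linarith [hx.1]⟩
    have h := this hQ (fun x hx => by simpa using hS (-x) (hneg x hx)) (hneg x hx) (by linarith)
    simpa [derivative_comp] using h
  have hcos : cos (arccos x) = x := cos_arccos hx.1 hx.2
  rcases lt_or_ge (arccos x) (π / (2 * n)) with hθ | hθ
  · refine abs_eval_derivative_le_of_cos_le hn hP hS ?_ hx.2
    rw [← hcos]
    exact cos_le_cos_of_nonneg_of_le_pi (arccos_nonneg x)
      (div_le_self pi_pos.le (by norm_cast; omega)) hθ.le
  · have hsin := inv_natCast_le_sin hn hθ (arccos_le_pi_div_two.2 hx₀)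
    have hB := abs_eval_derivative_cos_mul_sin_le hn hP hS (arccos x)
    rw [hcos, abs_mul, abs_of_pos ((inv_pos.2 (Nat.cast_pos.2 hn)).trans_le hsin)] at hB
    calc |(derivative P).eval x| = n * (|(derivative P).eval x| * (n : ℝ)⁻¹) := by field_simp
      _ ≤ n * (|(derivative P).eval x| * sin (arccos x)) := by gcongr
      _ ≤ n * (n * S) := by gcongr
      _ = n ^ 2 * S := by ring

theorem abs_eval_derivative_le_of_mem_Icc {a b : ℝ} (hab : a < b) (hP : P.degree ≤ n)
    (hS : ∀ x ∈ Icc a b, |P.eval x| ≤ S) {y : ℝ} (hy : y ∈ Icc a b) :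
    |(derivative P).eval y| ≤ 2 * n ^ 2 / (b - a) * S := by
  set ℓ : ℝ[X] := C ((b - a) / 2) * X + C ((a + b) / 2)
  have hℓ : ∀ x, ℓ.eval x = (b - a) / 2 * x + (a + b) / 2 := fun x => by simp [ℓ]
  have hQ : (P.comp ℓ).degree ≤ n := by
    refine degree_le_of_natDegree_le (natDegree_comp_le.trans ?_)
    exact (Nat.mul_le_mul (natDegree_le_of_degree_le hP) natDegree_linear_le).trans_eq (mul_one n)
  have hQS : ∀ x ∈ Icc (-1 : ℝ) 1, |(P.comp ℓ).eval x| ≤ S := fun x hx => by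
    rw [eval_comp, hℓ]
    exact hS _ ⟨by nlinarith [hx.1], by nlinarith [hx.2]⟩
  have hba : 0 < b - a := sub_pos.2 hab
  set x := (2 * y - (a + b)) / (b - a)
  have hx : x ∈ Icc (-1 : ℝ) 1 :=
    ⟨by rw [le_div_iff₀ hba]; linarith [hy.1], by rw [div_le_iff₀ hba]; linarith [hy.2]⟩
  have hℓx : ℓ.eval x = y := by
    simp only [hℓ, x]
    field_simp
    ring
  have h := abs_eval_derivative_le_sq_mul hQ hQS hx
  have hℓ' : (derivative ℓ).eval x = (b - a) / 2 := by simp [ℓ]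
  rw [derivative_comp, eval_mul, eval_comp, hℓx, hℓ', abs_mul, abs_of_pos (half_pos hba)] at h
  rw [div_mul_eq_mul_div, le_div_iff₀ hba]
  linarith

end Polynomial

theorem markov_inequality_interval_general (a b : ℝ) (hab : a < b) (n : ℕ)
    (P : Polynomial ℝ) (hP : P.degree ≤ n) :
    (⨆ x : Set.Icc a b, |(Polynomial.derivative P).eval ↑x|) ≤
      (2 * (n : ℝ) ^ 2 / (b - a)) * ⨆ x : Set.Icc a b, |P.eval ↑x| := by
  have : Nonempty (Icc a b) := ⟨⟨a, left_mem_Icc.2 hab.le⟩⟩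
  have hbdd : BddAbove (range fun x : Icc a b => |P.eval ↑x|) :=
    (isCompact_range (by fun_prop)).bddAbove
  exact ciSup_le fun y =>
    abs_eval_derivative_le_of_mem_Icc hab hP (fun x hx => le_ciSup hbdd ⟨x, hx⟩) y.2

/-- Markov's inequality on an arbitrary interval `[a,b]`:
`‖P'‖_{[a,b]} ≤ (2n²/(b−a)) · ‖P‖_{[a,b]}` for `P` of degree at most `n ≥ 1`. -/
theorem markov_inequality_interval (a b : ℝ) (hab : a < b) (n : ℕ) (hn : 1 ≤ n)
    (P : Polynomial ℝ) (hP : P.degree ≤ n) :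
    (⨆ x : Set.Icc a b, |(Polynomial.derivative P).eval ↑x|) ≤
      (2 * (n : ℝ) ^ 2 / (b - a)) * ⨆ x : Set.Icc a b, |P.eval ↑x| :=
  markov_inequality_interval_general a b hab n P hP
end

section
/- Let 0 < β < π and let T be a trigonometric polynomial of degree at most n, i.e., T(t) = a₀ + Σ_{k=1}^n (a_k cos(kt) + b_k sin(kt)) with real coefficients. Then for every θ ∈ (−β, β), |T'(θ)| ≤ n · (cos(θ/2) / √(sin²(β/2) − sin²(θ/2))) · sup_{t∈[−β,β]} |T(t)| (Videnskii's inequality). -/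
/-!
Substituting `t = 2 arcsin (sin (β/2) sin u)` maps `ℝ` onto `[-β, β]` and turns `T` into the
`2π`-periodic function `S u = T t`; the chain rule at the point `u₀` with `t = θ` reduces the
claim to `|S'(u₀)| ≤ 2n ‖T‖_{[-β,β]}`. Although `S` is not a trigonometric polynomial,
`t (u + π) = -t u`, so `S u + S (u + π)` and `S u * S (u + π)` are polynomials in
`cos t = 1 - 2 sin² (β/2) sin² u`, i.e. trigonometric polynomials of degree `2n` and `4n`.
This is enough for Bernstein's argument: if `S'(u₀) > 2nK` with `|S| < K`, then
`g = S - K cos (2n u + α)`, chosen to vanish at `u₀`, alternates in sign at the `4n` extrema of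
the cosine, and since it crosses zero upwards at `u₀`, between a positive and a negative
extremum, it has three zeros there instead of one: `4n + 1` zeros on a period. On the other
hand, a zero `z` of `g` makes `e^{iz}` and `-e^{iz}` roots of the polynomial attached to the
degree-`4n` trigonometric polynomial `g u * g (u + π)`, and roots arising twice are double, so
`g` has at most `4n` zeros on a period.
-/

open Real Finset Set Polynomial

open Complex in
/-- Trigonometric polynomials of degree at most `N`, encoded as `f u = e^{-iNu} Q(e^{iu})` with
`deg Q ≤ 2N`, so that the zeros of `f` on a period are roots of `Q`. -/
def IsTrigPoly (N : ℕ) (f : ℝ → ℝ) : Prop :=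
  ∃ Q : ℂ[X], Q.natDegree ≤ 2 * N ∧ ∀ u : ℝ, (f u : ℂ) * cexp (u * I) ^ N = Q.eval (cexp (u * I))

namespace IsTrigPoly

variable {N M : ℕ} {f g : ℝ → ℝ}

theorem const (N : ℕ) (c : ℝ) : IsTrigPoly N fun _ => c :=
  ⟨C (c : ℂ) * X ^ N, (natDegree_C_mul_X_pow_le _ _).trans (by omega), fun u => by simp⟩

theorem mono (hf : IsTrigPoly N f) (h : N ≤ M) : IsTrigPoly M f := by
  obtain ⟨Q, hQ, hf⟩ := hf
  refine ⟨Q * X ^ (M - N), natDegree_mul_le.trans ?_, fun u => ?_⟩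
  · rw [natDegree_X_pow]; omega
  · rw [eval_mul, eval_pow, eval_X, ← hf, mul_assoc, ← pow_add, Nat.add_sub_cancel' h]

theorem add (hf : IsTrigPoly N f) (hg : IsTrigPoly N g) : IsTrigPoly N fun u => f u + g u := by
  obtain ⟨Q, hQ, hf⟩ := hf
  obtain ⟨R, hR, hg⟩ := hg
  refine ⟨Q + R, (natDegree_add_le _ _).trans (max_le hQ hR), fun u => ?_⟩
  rw [eval_add, ← hf, ← hg]
  push_cast
  ring

theorem const_mul (hf : IsTrigPoly N f) (c : ℝ) : IsTrigPoly N fun u => c * f u := by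
  obtain ⟨Q, hQ, hf⟩ := hf
  refine ⟨C (c : ℂ) * Q, natDegree_C_mul_le _ _ |>.trans hQ, fun u => ?_⟩
  rw [eval_mul, eval_C, ← hf]
  push_cast
  ring

theorem neg (hf : IsTrigPoly N f) : IsTrigPoly N fun u => -f u := by
  simpa using hf.const_mul (-1)

theorem sub (hf : IsTrigPoly N f) (hg : IsTrigPoly N g) : IsTrigPoly N fun u => f u - g u := by
  simpa [sub_eq_add_neg] using hf.add hg.neg

theorem mul (hf : IsTrigPoly N f) (hg : IsTrigPoly M g) :
    IsTrigPoly (N + M) fun u => f u * g u := by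
  obtain ⟨Q, hQ, hf⟩ := hf
  obtain ⟨R, hR, hg⟩ := hg
  refine ⟨Q * R, natDegree_mul_le.trans (by omega), fun u => ?_⟩
  rw [eval_mul, ← hf, ← hg]
  push_cast
  ring

theorem pow (hf : IsTrigPoly N f) (k : ℕ) : IsTrigPoly (k * N) fun u => f u ^ k := by
  induction k with
  | zero => simpa using const 0 1
  | succ k ih => simpa [pow_succ, add_mul] using ih.mul hf

theorem sum {ι : Type*} (s : Finset ι) {f : ι → ℝ → ℝ} (h : ∀ i ∈ s, IsTrigPoly N (f i)) :
    IsTrigPoly N fun u => ∑ i ∈ s, f i u := by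
  classical
  induction s using Finset.induction with
  | empty => simpa using const N 0
  | insert i s hi ih =>
    simp only [Finset.sum_insert hi]
    exact (h i (mem_insert_self i s)).add (ih fun j hj => h j (mem_insert_of_mem hj))

theorem polynomial_eval (hf : IsTrigPoly N f) {P : ℝ[X]} {d : ℕ} (hP : P.natDegree ≤ d) :
    IsTrigPoly (d * N) fun u => P.eval (f u) := by
  simp only [eval_eq_sum_range]
  exact sum _ fun i hi =>
    ((hf.pow i).const_mul _).mono (Nat.mul_le_mul_right _ (by rw [Finset.mem_range] at hi; omega))

end IsTrigPoly

open Complex in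
theorem isTrigPoly_cos_mul_add (m : ℕ) (α : ℝ) : IsTrigPoly m fun u => Real.cos (m * u + α) := by
  refine ⟨C (cexp (α * I) / 2) * X ^ (2 * m) + C (cexp (-α * I) / 2), ?_, fun u => ?_⟩
  · exact (natDegree_add_le _ _).trans (max_le (natDegree_C_mul_X_pow_le _ _) (by simp))
  · simp only [eval_add, eval_mul, eval_C, eval_pow, eval_X, ofReal_cos, Complex.cos,
      ← Complex.exp_nat_mul]
    push_cast
    ring_nf
    simp only [← Complex.exp_add]
    ring_nf

theorem Polynomial.card_add_card_le_natDegree {R : Type*} [CommRing R] [IsDomain R]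
    [DecidableEq R] {Q : R[X]} (hQ : Q ≠ 0) {A B : Finset R}
    (hroot : ∀ z ∈ A ∪ B, Q.IsRoot z) (hderiv : ∀ z ∈ A ∩ B, Q.derivative.IsRoot z) :
    #A + #B ≤ Q.natDegree := by
  have hle : A.val + B.val ≤ Q.roots := by
    refine Multiset.le_iff_count.2 fun z => ?_
    rw [Multiset.count_add, Multiset.count_eq_of_nodup A.nodup,
      Multiset.count_eq_of_nodup B.nodup, count_roots]
    by_cases hA : z ∈ A <;> by_cases hB : z ∈ B <;>
      simp only [Finset.mem_val, hA, hB, if_true, if_false]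
    · exact (one_lt_rootMultiplicity_iff_isRoot hQ).2
        ⟨hroot z (mem_union_left _ hA), hderiv z (mem_inter.2 ⟨hA, hB⟩)⟩
    · exact (rootMultiplicity_pos hQ).2 (hroot z (mem_union_left _ hA))
    · exact (rootMultiplicity_pos hQ).2 (hroot z (mem_union_right _ hB))
    · exact Nat.zero_le _
  calc #A + #B = Multiset.card (A.val + B.val) := by simp
    _ ≤ Multiset.card Q.roots := Multiset.card_le_card hle
    _ ≤ Q.natDegree := card_roots' Q

open Complex in
theorem isRoot_cexp_of_eq_zero {N : ℕ} {f : ℝ → ℝ} {Q : ℂ[X]}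
    (hQ : ∀ u : ℝ, (f u : ℂ) * cexp (u * I) ^ N = Q.eval (cexp (u * I))) {u : ℝ} (hu : f u = 0) :
    Q.IsRoot (cexp (u * I)) := by
  simp [IsRoot, ← hQ u, hu]

open Complex in
theorem isRoot_derivative_cexp_of_hasDerivAt_zero {N : ℕ} {f : ℝ → ℝ} {Q : ℂ[X]}
    (hQ : ∀ u : ℝ, (f u : ℂ) * cexp (u * I) ^ N = Q.eval (cexp (u * I))) {u : ℝ} (hu : f u = 0)
    (hd : HasDerivAt f 0 u) : Q.derivative.IsRoot (cexp (u * I)) := by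
  have hexp : HasDerivAt (fun v : ℝ => cexp (v * I)) (cexp (u * I) * I) u := by
    simpa using ((hasDerivAt_id (u : ℂ)).comp_ofReal.mul_const I).cexp
  have h₁ : HasDerivAt (fun v : ℝ => Q.eval (cexp (v * I)))
      (Q.derivative.eval (cexp (u * I)) * (cexp (u * I) * I)) u :=
    (Q.hasDerivAt _).comp u hexp
  have h₂ : HasDerivAt (fun v : ℝ => Q.eval (cexp (v * I))) 0 u := by
    simp_rw [← hQ]
    simpa [hu] using hd.ofReal_comp.fun_mul (hexp.fun_pow N)
  simpa [IsRoot, Complex.exp_ne_zero, I_ne_zero] using h₁.unique h₂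

open Complex in
theorem card_image_cexp_mul_I {Z : Finset ℝ} {a : ℝ} (hZ : ∀ z ∈ Z, z ∈ Ico a (a + 2 * π)) :
    #(Z.image fun u : ℝ => cexp (u * I)) = #Z :=
  card_image_of_injOn fun u hu v hv huv =>
    Circle.exp_injOn_Ico (by linarith) (hZ u hu) (hZ v hv) (Subtype.ext huv)

open Complex in
theorem card_zeros_le_of_isTrigPoly_mul_shift {h : ℝ → ℝ} {N : ℕ} (hdiff : Differentiable ℝ h)
    (hper : Function.Periodic h (2 * π)) (hW : IsTrigPoly N fun u => h u * h (u + π))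
    (hne : ∃ u, h u * h (u + π) ≠ 0) {a : ℝ} {Z : Finset ℝ}
    (hZ : ∀ z ∈ Z, z ∈ Ico a (a + 2 * π)) (hZ0 : ∀ z ∈ Z, h z = 0) : #Z ≤ N := by
  classical
  obtain ⟨Q, hQdeg, hQ⟩ := hW
  have hQ0 : Q ≠ 0 := by
    rintro rfl
    obtain ⟨u, hu⟩ := hne
    exact hu (by simpa [Complex.exp_ne_zero] using hQ u)
  set Zπ := Z.map (addRightEmbedding π)
  have hZπ : ∀ z ∈ Zπ, z ∈ Ico (a + π) (a + π + 2 * π) := by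
    simp only [Zπ, mem_map, addRightEmbedding_apply]
    rintro _ ⟨z, hz, rfl⟩
    exact ⟨by linarith [(hZ z hz).1], by linarith [(hZ z hz).2]⟩
  have hroots : ∀ ξ ∈ Z.image (fun u : ℝ => cexp (u * I)) ∪ Zπ.image (fun u : ℝ => cexp (u * I)),
      Q.IsRoot ξ := by
    intro ξ hξ
    simp only [Zπ, Finset.mem_union, Finset.mem_image, mem_map, addRightEmbedding_apply] at hξ
    rcases hξ with ⟨z, hz, rfl⟩ | ⟨_, ⟨z, hz, rfl⟩, rfl⟩
    · exact isRoot_cexp_of_eq_zero (f := fun u => h u * h (u + π)) hQ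
        (by rw [hZ0 z hz, zero_mul])
    · exact isRoot_cexp_of_eq_zero (f := fun u => h u * h (u + π)) hQ
        (by rw [add_assoc, ← two_mul, hper, hZ0 z hz, mul_zero])
  have hderiv : ∀ ξ ∈ Z.image (fun u : ℝ => cexp (u * I)) ∩ Zπ.image (fun u : ℝ => cexp (u * I)),
      Q.derivative.IsRoot ξ := by
    intro ξ hξ
    simp only [Zπ, Finset.mem_inter, Finset.mem_image, mem_map, addRightEmbedding_apply] at hξ
    obtain ⟨⟨z, hz, rfl⟩, ⟨_, ⟨y, hy, rfl⟩, hyz⟩⟩ := hξ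
    obtain ⟨k, hk⟩ :=
      Circle.exp_eq_exp.1 (Subtype.ext hyz.symm : Circle.exp z = Circle.exp (y + π))
    have hzπ : h (z + π) = 0 := by
      rw [hk, show y + π + k * (2 * π) + π = y + ((k + 1 : ℤ) : ℝ) * (2 * π) by push_cast; ring,
        hper.int_mul (k + 1) y, hZ0 y hy]
    refine isRoot_derivative_cexp_of_hasDerivAt_zero (f := fun u => h u * h (u + π)) hQ
      (by rw [hZ0 z hz, zero_mul]) ?_
    simpa [hZ0 z hz, hzπ] using
      (hdiff z).hasDerivAt.fun_mul ((hdiff (z + π)).hasDerivAt.comp_add_const z π)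
  have := card_add_card_le_natDegree hQ0 hroots hderiv
  rw [card_image_cexp_mul_I hZ, card_image_cexp_mul_I hZπ, card_map] at this
  omega

theorem exists_zero_mem_Ioo_of_mul_neg {f : ℝ → ℝ} (hf : Continuous f) {a b : ℝ} (hab : a ≤ b)
    (hsign : f a * f b < 0) : ∃ z ∈ Ioo a b, f z = 0 := by
  rcases mul_neg_iff.1 hsign with ⟨ha, hb⟩ | ⟨ha, hb⟩
  · exact intermediate_value_Ioo' hab hf.continuousOn ⟨hb, ha⟩
  · exact intermediate_value_Ioo hab hf.continuousOn ⟨ha, hb⟩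

theorem exists_card_zeros_of_alternating {f : ℝ → ℝ} (hf : Continuous f) {x : ℕ → ℝ}
    (hx : StrictMono x) (hsign : ∀ j, 0 < (-1) ^ j * f (x j)) (k : ℕ) :
    ∃ Z : Finset ℝ, #Z = k ∧ ∀ z ∈ Z, z ∈ Ioo (x 0) (x k) ∧ f z = 0 := by
  induction k with
  | zero => exact ⟨∅, rfl, by simp⟩
  | succ k ih =>
    obtain ⟨Z, hZ, hZmem⟩ := ih
    have hchange : f (x k) * f (x (k + 1)) < 0 := by
      have := mul_pos (hsign k) (hsign (k + 1))
      have hsq : ((-1 : ℝ) ^ k) ^ 2 = 1 := by rw [← pow_mul, mul_comm, pow_mul]; norm_num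
      linear_combination this - f (x k) * f (x (k + 1)) * hsq
    obtain ⟨z, hz, hfz⟩ := exists_zero_mem_Ioo_of_mul_neg hf (hx (lt_add_one k)).le hchange
    have hzZ : z ∉ Z := fun hmem => lt_asymm hz.1 (hZmem z hmem).1.2
    refine ⟨insert z Z, by rw [card_insert_of_notMem hzZ, hZ], fun y hy => ?_⟩
    rcases Finset.mem_insert.1 hy with rfl | hy
    · exact ⟨⟨(hx.monotone k.zero_le).trans_lt hz.1, hz.2⟩, hfz⟩
    · exact ⟨⟨(hZmem y hy).1.1, (hZmem y hy).1.2.trans (hx (lt_add_one k))⟩, (hZmem y hy).2⟩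

theorem exists_card_zeros_of_alternating_of_deriv_pos {g : ℝ → ℝ} (hg : Continuous g)
    {e : ℕ → ℝ} (he : StrictMono e) (hsign : ∀ j, 0 < (-1) ^ j * g (e j)) {u₀ : ℝ}
    (hu₀ : u₀ ∈ Ioo (e 0) (e 1)) (hzero : g u₀ = 0) (hd : 0 < deriv g u₀) (k : ℕ) :
    ∃ Z : Finset ℝ, #Z = k + 3 ∧ ∀ z ∈ Z, z ∈ Ioo (e 0) (e (k + 1)) ∧ g z = 0 := by
  have hloc := eventually_nhdsWithin_sign_eq_of_deriv_pos hd hzero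
  obtain ⟨w₁, hw₁, hgw₁⟩ : ∃ w ∈ Ioo (e 0) u₀, g w < 0 := by
    obtain ⟨w, hsgn, hw⟩ :=
      ((hloc.filter_mono nhdsWithin_le_nhds).and (Ioo_mem_nhdsLT hu₀.1)).exists
    exact ⟨w, hw, by simpa [sub_neg.2 hw.2, sign_eq_neg_one_iff] using hsgn⟩
  obtain ⟨w₂, hw₂, hgw₂⟩ : ∃ w ∈ Ioo u₀ (e 1), 0 < g w := by
    obtain ⟨w, hsgn, hw⟩ :=
      ((hloc.filter_mono nhdsWithin_le_nhds).and (Ioo_mem_nhdsGT hu₀.2)).exists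
    exact ⟨w, hw, by simpa [sub_pos.2 hw.1, sign_eq_one_iff] using hsgn⟩
  let x : ℕ → ℝ
    | 0 => e 0
    | 1 => w₁
    | 2 => w₂
    | j + 3 => e (j + 1)
  have hx : StrictMono x := strictMono_nat_of_lt_succ fun
    | 0 => hw₁.1
    | 1 => hw₁.2.trans hw₂.1
    | 2 => hw₂.2
    | j + 3 => he (lt_add_one _)
  have hxsign : ∀ j, 0 < (-1) ^ j * g (x j)
    | 0 => hsign 0
    | 1 => by simpa [x] using hgw₁
    | 2 => by simpa [x] using hgw₂
    | j + 3 => by simpa [x, pow_succ] using hsign (j + 1)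
  exact exists_card_zeros_of_alternating hg hx hxsign (k + 3)

theorem exists_mem_Ioo_neg_pi_zero_mul_cos_eq {K y : ℝ} (h : |y| < K) :
    ∃ φ ∈ Ioo (-π) 0, K * cos φ = y := by
  have hK : 0 < K := (abs_nonneg y).trans_lt h
  obtain ⟨h₁, h₂⟩ := abs_lt.1 h
  have h₁' : -1 < y / K := by rw [lt_div_iff₀ hK]; linarith
  have h₂' : y / K < 1 := by rw [div_lt_one hK]; linarith
  refine ⟨-arccos (y / K), ⟨by linarith [arccos_lt_pi.2 h₁'], by linarith [arccos_pos.2 h₂']⟩, ?_⟩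
  rw [cos_neg, cos_arccos h₁'.le h₂'.le]
  field_simp

theorem neg_one_pow_mul_sub_mul_cos_pos {s K : ℝ} (hs : |s| < K) (j : ℕ) :
    0 < (-1) ^ j * (s - K * cos (j * π - π)) := by
  rw [cos_sub_pi, cos_nat_mul_pi]
  obtain ⟨h₁, h₂⟩ := abs_lt.1 hs
  rcases neg_one_pow_eq_or ℝ j with h | h <;> rw [h] <;> linarith

theorem Function.Periodic.sub_mul_cos {S : ℝ → ℝ} (hper : Function.Periodic S (2 * π)) (n : ℕ)
    (K α : ℝ) : Function.Periodic (fun u => S u - K * cos (2 * n * u + α)) (2 * π) := fun u => by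
  simp only [hper u]
  rw [show 2 * n * (u + 2 * π) + α = 2 * n * u + α + (2 * n : ℕ) * (2 * π) by push_cast; ring,
    cos_add_nat_mul_two_pi]

theorem isTrigPoly_mul_shift_sub_cos {S : ℝ → ℝ} {n : ℕ}
    (hsum : IsTrigPoly (2 * n) fun u => S u + S (u + π))
    (hmul : IsTrigPoly (4 * n) fun u => S u * S (u + π)) (K α : ℝ) :
    IsTrigPoly (4 * n) fun u =>
      (S u - K * cos (2 * n * u + α)) * (S (u + π) - K * cos (2 * n * (u + π) + α)) := by
  have hc : IsTrigPoly (2 * n) fun u => cos (2 * n * u + α) := by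
    simpa using isTrigPoly_cos_mul_add (2 * n) α
  have hshift : ∀ u, cos (2 * n * (u + π) + α) = cos (2 * n * u + α) := fun u => by
    rw [show 2 * n * (u + π) + α = 2 * n * u + α + n * (2 * π) by ring, cos_add_nat_mul_two_pi]
  have h4n : 2 * n + 2 * n = 4 * n := by omega
  simp only [hshift]
  convert (hmul.sub (h4n ▸ (hc.mul hsum).const_mul K)).add (h4n ▸ (hc.mul hc).const_mul (K ^ 2))
    using 1
  ext u
  ring

theorem deriv_sub_mul_cos_pos {S : ℝ → ℝ} {D K m α u₀ : ℝ} (hD : HasDerivAt S D u₀) (hK : 0 ≤ K)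
    (hm : 0 ≤ m) (hKD : m * K < D) : 0 < deriv (fun u => S u - K * cos (m * u + α)) u₀ := by
  have hc : HasDerivAt (fun u => K * cos (m * u + α)) (K * (-sin (m * u₀ + α) * m)) u₀ := by
    simpa using (((hasDerivAt_id u₀).const_mul m).add_const α).cos.const_mul K
  rw [(hD.fun_sub hc).deriv]
  nlinarith [mul_nonneg (mul_nonneg hm hK) (neg_le_iff_add_nonneg.1 (neg_one_le_sin (m * u₀ + α)))]

theorem le_of_hasDerivAt_of_isTrigPoly_shift {S : ℝ → ℝ} {n : ℕ} {K D u₀ : ℝ} (hn : 0 < n)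
    (hdiff : Differentiable ℝ S) (hper : Function.Periodic S (2 * π)) (hSK : ∀ u, |S u| < K)
    (hsum : IsTrigPoly (2 * n) fun u => S u + S (u + π))
    (hmul : IsTrigPoly (4 * n) fun u => S u * S (u + π)) (hD : HasDerivAt S D u₀) :
    D ≤ 2 * n * K := by
  by_contra! hKD
  set m : ℝ := 2 * n
  have hm : 0 < m := by positivity
  have hK : 0 < K := (abs_nonneg _).trans_lt (hSK 0)
  obtain ⟨φ, hφ, hcos⟩ := exists_mem_Ioo_neg_pi_zero_mul_cos_eq (hSK u₀)
  set α := φ - m * u₀ with hα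
  set g : ℝ → ℝ := fun u => S u - K * cos (m * u + α)
  set e : ℕ → ℝ := fun j => (j * π - π - α) / m
  have hme : ∀ j : ℕ, m * e j + α = j * π - π := fun j => by simp only [e]; field_simp; ring
  have he : StrictMono e := strictMono_nat_of_lt_succ fun j => by
    simp only [e]; gcongr; linarith [pi_pos]
  have hsign : ∀ j, 0 < (-1) ^ j * g (e j) := fun j => by
    simpa only [g, hme] using neg_one_pow_mul_sub_mul_cos_pos (hSK (e j)) j
  have hu₀ : u₀ ∈ Ioo (e 0) (e 1) := by
    simp only [e, Nat.cast_zero, Nat.cast_one, Set.mem_Ioo, lt_div_iff₀ hm, div_lt_iff₀ hm, hα]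
    constructor <;> linarith [hφ.1, hφ.2]
  have hg : Differentiable ℝ g := hdiff.sub (by fun_prop)
  obtain ⟨Z, hZcard, hZ⟩ := exists_card_zeros_of_alternating_of_deriv_pos hg.continuous he hsign
    hu₀ (by simp [g, hα, hcos]) (deriv_sub_mul_cos_pos hD hK.le hm.le hKD) (4 * n - 2)
  have he4n : e (4 * n) = e 0 + 2 * π := by simp only [e]; field_simp; push_cast; ring
  have hne : g (e 1) * g (e 1 + π) ≠ 0 := by
    have h₁ := hsign 1
    have h₂ := hsign (2 * n + 1)
    rw [pow_one] at h₁
    rw [pow_succ, pow_mul, neg_one_sq, one_pow, one_mul] at h₂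
    rw [show e 1 + π = e (2 * n + 1) by simp only [e]; field_simp; push_cast; ring]
    exact (mul_pos_of_neg_of_neg (by linarith) (by linarith)).ne'
  have := card_zeros_le_of_isTrigPoly_mul_shift hg (hper.sub_mul_cos n K α)
    (isTrigPoly_mul_shift_sub_cos hsum hmul K α) ⟨e 1, hne⟩ (a := e 0)
    (fun z hz => ⟨(hZ z hz).1.1.le, he4n ▸ (hZ z hz).1.2.trans_le (he.monotone (by omega))⟩)
    (fun z hz => (hZ z hz).2)
  omega

theorem abs_le_of_hasDerivAt_of_isTrigPoly_shift {S : ℝ → ℝ} {n : ℕ} {M D u₀ : ℝ} (hn : 0 < n)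
    (hdiff : Differentiable ℝ S) (hper : Function.Periodic S (2 * π)) (hM : ∀ u, |S u| ≤ M)
    (hsum : IsTrigPoly (2 * n) fun u => S u + S (u + π))
    (hmul : IsTrigPoly (4 * n) fun u => S u * S (u + π)) (hD : HasDerivAt S D u₀) :
    |D| ≤ 2 * n * M := by
  refine le_of_forall_gt_imp_ge_of_dense fun a ha => ?_
  have hn' : (0 : ℝ) < 2 * n := by positivity
  have hSK : ∀ u, |S u| < a / (2 * n) := fun u => (hM u).trans_lt (by rwa [lt_div_iff₀' hn'])
  rw [← mul_div_cancel₀ a hn'.ne']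
  refine abs_le.2 ⟨?_, le_of_hasDerivAt_of_isTrigPoly_shift hn hdiff hper hSK hsum hmul hD⟩
  have := le_of_hasDerivAt_of_isTrigPoly_shift (S := fun u => -S u) hn hdiff.neg
    (fun u => by simp [hper u]) (by simpa using hSK)
    (by convert hsum.neg using 1; ext u; ring) (by simpa using hmul) hD.neg
  linarith

theorem exists_polynomial_cos_sin_of_trig {n : ℕ} {a b : ℕ → ℝ} {T : ℝ → ℝ}
    (hT : ∀ t, T t = a 0 + ∑ k ∈ Icc 1 n, (a k * cos (k * t) + b k * sin (k * t))) :
    ∃ P R : ℝ[X], P.natDegree ≤ n ∧ R.natDegree ≤ n - 1 ∧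
      ∀ t, T t = P.eval (cos t) + sin t * R.eval (cos t) := by
  refine ⟨C (a 0) + ∑ k ∈ Icc 1 n, C (a k) * Chebyshev.T ℝ k,
    ∑ k ∈ Icc 1 n, C (b k) * Chebyshev.U ℝ (k - 1 : ℕ), ?_, ?_, fun t => ?_⟩
  · refine (natDegree_add_le _ _).trans (max_le (by simp) ?_)
    refine natDegree_sum_le_of_forall_le _ _ fun k hk => (natDegree_C_mul_le _ _).trans ?_
    rw [Chebyshev.natDegree_T]
    simpa using (Finset.mem_Icc.1 hk).2
  · refine natDegree_sum_le_of_forall_le _ _ fun k hk => (natDegree_C_mul_le _ _).trans ?_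
    rw [Chebyshev.natDegree_U_natCast]
    have := (Finset.mem_Icc.1 hk).2
    omega
  · simp only [hT t, eval_add, eval_C, eval_finsetSum, eval_mul, Chebyshev.T_real_cos,
      Int.cast_natCast, mul_sum, add_assoc, ← sum_add_distrib]
    refine congrArg _ (sum_congr rfl fun k hk => ?_)
    rw [mul_left_comm, mul_comm (sin t), Chebyshev.U_real_cos]
    push_cast [Nat.cast_sub (Finset.mem_Icc.1 hk).1]
    ring_nf

theorem exists_polynomial_cos_add_neg_mul_neg {n : ℕ} (hn : 0 < n) {a b : ℕ → ℝ} {T : ℝ → ℝ}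
    (hT : ∀ t, T t = a 0 + ∑ k ∈ Icc 1 n, (a k * cos (k * t) + b k * sin (k * t))) :
    ∃ P Q : ℝ[X], P.natDegree ≤ n ∧ Q.natDegree ≤ 2 * n ∧
      ∀ t, T t + T (-t) = P.eval (cos t) ∧ T t * T (-t) = Q.eval (cos t) := by
  obtain ⟨P, R, hP, hR, hT⟩ := exists_polynomial_cos_sin_of_trig hT
  refine ⟨2 * P, P ^ 2 - (1 - X ^ 2) * R ^ 2, ?_, ?_, fun t => ⟨?_, ?_⟩⟩
  · exact natDegree_mul_le.trans (by simpa using hP)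
  · refine (natDegree_sub_le _ _).trans (max_le (natDegree_pow_le.trans (by omega)) ?_)
    have h₂ : (1 - X ^ 2 : ℝ[X]).natDegree ≤ 2 := (natDegree_sub_le _ _).trans (by simp)
    exact natDegree_mul_le.trans (add_le_add h₂ natDegree_pow_le) |>.trans (by omega)
  · simp only [hT, cos_neg, sin_neg, eval_mul, eval_ofNat]
    ring
  · simp only [hT, cos_neg, sin_neg, eval_mul, eval_sub, eval_pow, eval_one, eval_X]
    linear_combination -(R.eval (cos t)) ^ 2 * sin_sq_add_cos_sq t

theorem isTrigPoly_cos_two_mul_arcsin_mul_sin {ω : ℝ} (hω : |ω| ≤ 1) :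
    IsTrigPoly 2 fun u => cos (2 * arcsin (ω * sin u)) := by
  have hx : ∀ u, |ω * sin u| ≤ 1 := fun u => by
    rw [abs_mul]; exact mul_le_one₀ hω (abs_nonneg _) (abs_sin_le_one u)
  convert (IsTrigPoly.const 2 (1 - ω ^ 2)).add ((isTrigPoly_cos_mul_add 2 0).const_mul (ω ^ 2))
    using 1
  ext u
  rw [cos_two_mul, cos_arcsin, sq_sqrt (by nlinarith [abs_le.1 (hx u), abs_nonneg (ω * sin u)]),
    Nat.cast_ofNat, add_zero, cos_two_mul, cos_sq']
  ring

theorem isTrigPoly_comp_two_mul_arcsin_mul_sin {ω : ℝ} (hω : |ω| ≤ 1) {F : ℝ → ℝ} {P : ℝ[X]}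
    {d : ℕ} (hP : P.natDegree ≤ d) (hF : ∀ t, F t = P.eval (cos t)) :
    IsTrigPoly (2 * d) fun u => F (2 * arcsin (ω * sin u)) := by
  simpa only [hF, mul_comm 2 d] using (isTrigPoly_cos_two_mul_arcsin_mul_sin hω).polynomial_eval hP

theorem two_mul_arcsin_mul_sin_mem_Icc {β : ℝ} (hβ : β ∈ Icc 0 π) (u : ℝ) :
    2 * arcsin (sin (β / 2) * sin u) ∈ Icc (-β) β := by
  obtain ⟨hβ₀, hβπ⟩ := hβ
  have hs : 0 ≤ sin (β / 2) := sin_nonneg_of_nonneg_of_le_pi (by linarith) (by linarith)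
  have harc : arcsin (sin (β / 2)) = β / 2 := arcsin_sin (by linarith [pi_pos]) (by linarith)
  have h₁ : arcsin (sin (β / 2) * sin u) ≤ β / 2 := calc
    _ ≤ arcsin (sin (β / 2)) := arcsin_le_arcsin (mul_le_of_le_one_right hs (sin_le_one u))
    _ = β / 2 := harc
  have h₂ : -(β / 2) ≤ arcsin (sin (β / 2) * sin u) := calc
    -(β / 2) = arcsin (-sin (β / 2)) := by rw [arcsin_neg, harc]
    _ ≤ _ := arcsin_le_arcsin (by nlinarith [neg_one_le_sin u])
  constructor <;> linarith

theorem exists_hasDerivAt_two_mul_arcsin_mul_sin {ω θ : ℝ} (hθ : θ ∈ Ioo (-π) π)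
    (hω : |sin (θ / 2)| < ω) : ∃ u₀, 2 * arcsin (ω * sin u₀) = θ ∧
      HasDerivAt (fun u => 2 * arcsin (ω * sin u))
        (2 * √(ω ^ 2 - sin (θ / 2) ^ 2) / cos (θ / 2)) u₀ := by
  have hω0 : 0 < ω := (abs_nonneg _).trans_lt hω
  have hc : 0 < cos (θ / 2) := cos_pos_of_mem_Ioo ⟨by linarith [hθ.1], by linarith [hθ.2]⟩
  have hs : |sin (θ / 2) / ω| < 1 := by rwa [abs_div, abs_of_pos hω0, div_lt_one hω0]
  obtain ⟨hs₁, hs₂⟩ := abs_lt.1 hs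
  have hsin : ω * sin (arcsin (sin (θ / 2) / ω)) = sin (θ / 2) := by
    rw [sin_arcsin hs₁.le hs₂.le]; field_simp
  refine ⟨arcsin (sin (θ / 2) / ω), ?_, ?_⟩
  · rw [hsin, arcsin_sin (by linarith [hθ.1]) (by linarith [hθ.2])]
    ring
  · set u₀ := arcsin (sin (θ / 2) / ω)
    have hs1 : sin (θ / 2) ^ 2 < 1 := by nlinarith [sin_sq_add_cos_sq (θ / 2)]
    have h₁ : ω * sin u₀ ≠ -1 := by rw [hsin]; rintro h; rw [h] at hs1; norm_num at hs1
    have h₂ : ω * sin u₀ ≠ 1 := by rw [hsin]; rintro h; rw [h] at hs1; norm_num at hs1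
    have hcos : √(1 - sin (θ / 2) ^ 2) = cos (θ / 2) := by rw [← cos_sq', sqrt_sq hc.le]
    have hR : ω * cos u₀ = √(ω ^ 2 - sin (θ / 2) ^ 2) := calc
      ω * cos u₀ = √(ω ^ 2) * √(1 - (sin (θ / 2) / ω) ^ 2) := by rw [sqrt_sq hω0.le, cos_arcsin]
      _ = √(ω ^ 2 - sin (θ / 2) ^ 2) := by rw [← sqrt_mul (sq_nonneg ω)]; congr 1; field_simp
    refine (((hasDerivAt_arcsin h₁ h₂).comp u₀ ((hasDerivAt_sin u₀).const_mul ω)).const_mul 2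
      ).congr_deriv ?_
    rw [hsin, hcos, ← hR]
    ring

theorem abs_sin_half_lt_sin_half {θ β : ℝ} (hθ : |θ| < β) (hβ : β ≤ π) :
    |sin (θ / 2)| < sin (β / 2) := by
  obtain ⟨h₁, h₂⟩ := abs_lt.1 hθ
  refine abs_lt.2 ⟨?_, sin_lt_sin_of_lt_of_le_pi_div_two (by linarith) (by linarith) (by linarith)⟩
  rw [← sin_neg]
  exact sin_lt_sin_of_lt_of_le_pi_div_two (by linarith) (by linarith) (by linarith)

theorem abs_le_of_hasDerivAt_comp_two_mul_arcsin_mul_sin {n : ℕ} (hn : 0 < n) {a b : ℕ → ℝ}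
    {T : ℝ → ℝ} (hT : ∀ t, T t = a 0 + ∑ k ∈ Icc 1 n, (a k * cos (k * t) + b k * sin (k * t)))
    {β M : ℝ} (hβ : 0 ≤ β) (hβπ : β < π) (hM : ∀ t ∈ Icc (-β) β, |T t| ≤ M) {u₀ D : ℝ}
    (hD : HasDerivAt (fun u => T (2 * arcsin (sin (β / 2) * sin u))) D u₀) :
    |D| ≤ 2 * n * M := by
  have hTd : Differentiable ℝ T := by rw [funext hT]; fun_prop
  obtain ⟨P, Q, hP, hQ, hPQ⟩ := exists_polynomial_cos_add_neg_mul_neg hn hT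
  have hω : |sin (β / 2)| < 1 := by
    simpa using abs_sin_half_lt_sin_half (abs_lt.2 ⟨by linarith [pi_pos], hβπ⟩) le_rfl
  have hshift : ∀ u, T (2 * arcsin (sin (β / 2) * sin (u + π))) =
      T (-(2 * arcsin (sin (β / 2) * sin u))) := fun u => by simp [sin_add_pi, arcsin_neg]
  refine abs_le_of_hasDerivAt_of_isTrigPoly_shift hn (fun u => ?_) (fun u => by simp)
    (fun u => hM _ (two_mul_arcsin_mul_sin_mem_Icc ⟨hβ, hβπ.le⟩ u))
    (by simpa only [hshift] using
      isTrigPoly_comp_two_mul_arcsin_mul_sin hω.le hP fun t => (hPQ t).1)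
    (by simpa only [hshift] using
      (isTrigPoly_comp_two_mul_arcsin_mul_sin hω.le hQ fun t => (hPQ t).2).mono (by omega)) hD
  have hx : |sin (β / 2) * sin u| < 1 := by
    rw [abs_mul]
    exact (mul_le_of_le_one_right (abs_nonneg _) (abs_sin_le_one u)).trans_lt hω
  obtain ⟨hx₁, hx₂⟩ := abs_lt.1 hx
  exact (hTd _).comp u (((differentiableAt_arcsin.2 ⟨hx₁.ne', hx₂.ne⟩).comp u
    (differentiableAt_sin.const_mul _)).const_mul 2)

/-- Videnskii's inequality: for a trigonometric polynomial `T` of degree at most `n`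
and `0 < β < π`, for every `θ ∈ (−β, β)`,
`|T'(θ)| ≤ n · cos(θ/2)/√(sin²(β/2) − sin²(θ/2)) · ‖T‖_{[−β,β]}`. -/
theorem videnskii_inequality (β : ℝ) (hβ : 0 < β) (hβπ : β < Real.pi)
    (n : ℕ) (a b : ℕ → ℝ) (T : ℝ → ℝ)
    (hT : ∀ t : ℝ, T t =
      a 0 + ∑ k ∈ Finset.Icc 1 n, (a k * Real.cos (k * t) + b k * Real.sin (k * t)))
    (θ : ℝ) (hθ : θ ∈ Set.Ioo (-β) β) :
    |deriv T θ| ≤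
      (n : ℝ) * (Real.cos (θ / 2) / Real.sqrt (Real.sin (β / 2) ^ 2 - Real.sin (θ / 2) ^ 2)) *
        ⨆ t : Set.Icc (-β) β, |T ↑t| := by
  rcases n.eq_zero_or_pos with rfl | hn
  · simp [funext hT]
  have hTd : Differentiable ℝ T := by rw [funext hT]; fun_prop
  have hbdd : BddAbove (range fun t : Set.Icc (-β) β => |T t|) := image_eq_range (|T ·|) _ ▸
    isCompact_Icc.bddAbove_image hTd.continuous.abs.continuousOn
  have hθβ : |sin (θ / 2)| < sin (β / 2) := abs_sin_half_lt_sin_half (abs_lt.2 hθ) hβπ.le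
  obtain ⟨u₀, hu₀, hw⟩ := exists_hasDerivAt_two_mul_arcsin_mul_sin
    ⟨by linarith [hθ.1], by linarith [hθ.2]⟩ hθβ
  have key := abs_le_of_hasDerivAt_comp_two_mul_arcsin_mul_sin hn hT hβ.le hβπ
    (fun t ht => le_ciSup hbdd ⟨t, ht⟩) ((hTd _).hasDerivAt.comp u₀ hw)
  have hc : 0 < cos (θ / 2) := cos_pos_of_mem_Ioo ⟨by linarith [hθ.1], by linarith [hθ.2]⟩
  have hR : 0 < √(sin (β / 2) ^ 2 - sin (θ / 2) ^ 2) :=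
    sqrt_pos.2 (sub_pos.2 (sq_lt_sq' (abs_lt.1 hθβ).1 (abs_lt.1 hθβ).2))
  set c := 2 * √(sin (β / 2) ^ 2 - sin (θ / 2) ^ 2) / cos (θ / 2)
  have hc0 : 0 < c := by positivity
  rw [hu₀, abs_mul, abs_of_pos hc0] at key
  calc |deriv T θ| = |deriv T θ| * c / c := (mul_div_cancel_right₀ _ hc0.ne').symm
    _ ≤ 2 * n * (⨆ t : Set.Icc (-β) β, |T t|) / c := by gcongr
    _ = _ := by simp only [c]; field_simp
end

section
/- Let P be a real algebraic polynomial of degree at most n ≥ 1. Then for every x ∈ [−1,1], (1−x²)·P'(x)² + n²·P(x)² ≤ n² · (sup_{t∈[−1,1]} |P(t)|)² (the Szegő–Schaake–van der Corput inequality). -/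
/-
On the unit circle `z = e^{iθ}`, `x = cos θ`, the polynomial `S(z) = z^n P((z + z⁻¹)/2)` has
degree `2n` and `|S(z)| = |P(x)| ≤ M`, and both `|S'(z)|` and `|2n S(z) - z S'(z)|` equal
`√(n² P(x)² + (1 - x²) P'(x)²)`. So the claim follows from Malik's inequality
`|p'(z)| + |m p(z) - z p'(z)| ≤ m ‖p‖` on the circle, for `p` of degree at most `m`.

For Malik's inequality: if `|c| > ‖p‖` then all zeros of `F = c z^m - p` lie in the open unit
disc (maximum principle for the reversed polynomial), and a polynomial `F` of degree `d` with all
zeros in the closed disc satisfies `|d F(z) - z F'(z)| ≤ |z F'(z)|` on the circle, because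
`Re (z / (z - r)) ≥ 1/2` for each zero `r`. Choosing `arg c` so that `m c z^(m-1)` points along
`p'(z)` and letting `|c|` decrease to `‖p‖` gives the inequality.
-/

open Polynomial Complex
open scoped ComplexConjugate

theorem half_le_re_div_sub {z r : ℂ} (hr : ‖r‖ ≤ ‖z‖) (hzr : z ≠ r) :
    1 / 2 ≤ (z / (z - r)).re := by
  have hpos : 0 < normSq (z - r) := normSq_pos.mpr (sub_ne_zero.mpr hzr)
  have hsq : normSq r ≤ normSq z := by
    simpa only [← Complex.sq_norm] using pow_le_pow_left₀ (norm_nonneg r) hr 2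
  rw [div_re, ← add_div, le_div_iff₀ hpos]
  simp only [normSq_apply, sub_re, sub_im] at *
  nlinarith

theorem norm_ofReal_sub_le_norm {d : ℝ} {A : ℂ} (hd : 0 ≤ d) (hA : d / 2 ≤ A.re) :
    ‖(d : ℂ) - A‖ ≤ ‖A‖ := by
  rw [norm_def, norm_def]
  refine Real.sqrt_le_sqrt ?_
  simp only [normSq_apply, sub_re, sub_im, ofReal_re, ofReal_im]
  nlinarith

theorem norm_natDegree_mul_eval_sub_le {p : ℂ[X]} {z : ℂ}
    (hroots : ∀ r ∈ p.roots, ‖r‖ ≤ ‖z‖) :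
    ‖(p.natDegree : ℂ) * p.eval z - z * (derivative p).eval z‖ ≤
      ‖z * (derivative p).eval z‖ := by
  by_cases hpz : p.eval z = 0
  · simp [hpz]
  set A := (p.roots.map fun r => z / (z - r)).sum
  have hA : z * (derivative p).eval z = p.eval z * A := by
    rw [(IsAlgClosed.splits p).eval_derivative_eq_eval_mul_sum hpz, mul_left_comm,
      ← Multiset.sum_map_mul_left]
    simp only [mul_one_div, A]
  have hre : (p.natDegree : ℝ) / 2 ≤ A.re := by
    have hterm : ∀ w ∈ p.roots.map fun r => (z / (z - r)).re, 1 / 2 ≤ w := by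
      simp only [Multiset.mem_map]
      rintro _ ⟨r, hr, rfl⟩
      exact half_le_re_div_sub (hroots r hr) fun h => hpz (h ▸ (mem_roots'.mp hr).2)
    have := Multiset.card_nsmul_le_sum hterm
    rw [Multiset.card_map, IsAlgClosed.card_roots_eq_natDegree, nsmul_eq_mul] at this
    have hsum : A.re = (p.roots.map fun r => (z / (z - r)).re).sum :=
      (map_multiset_sum reAddGroupHom _).trans (by rw [Multiset.map_map]; rfl)
    rw [hsum]
    linarith
  calc ‖(p.natDegree : ℂ) * p.eval z - z * (derivative p).eval z‖
      = ‖p.eval z‖ * ‖((p.natDegree : ℝ) : ℂ) - A‖ := by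
        rw [hA, ← norm_mul]; push_cast; ring_nf
    _ ≤ ‖p.eval z‖ * ‖A‖ := by gcongr; exact norm_ofReal_sub_le_norm (by positivity) hre
    _ = ‖z * (derivative p).eval z‖ := by rw [hA, norm_mul]

section UnitCircle

variable {p : ℂ[X]} {m : ℕ} {M : ℝ}

theorem norm_eval_le_of_norm_le_one (h : ∀ w : ℂ, ‖w‖ = 1 → ‖p.eval w‖ ≤ M) {z : ℂ}
    (hz : ‖z‖ ≤ 1) : ‖p.eval z‖ ≤ M := by
  refine norm_le_of_forall_mem_frontier_norm_le (Metric.isBounded_ball (x := 0) (r := 1))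
    p.differentiable.diffContOnCl (fun w hw => h w ?_) ?_
  · simpa [frontier_ball (0 : ℂ) one_ne_zero] using hw
  · simpa [closure_ball (0 : ℂ) one_ne_zero] using hz

theorem eval_reflect_inv_mul_pow (hp : p.natDegree ≤ m) {z : ℂ} (hz : z ≠ 0) :
    (reflect m p).eval z⁻¹ * z ^ m = p.eval z := by
  have : Invertible z := invertibleOfNonzero hz
  simpa [eval₂_eq_eval_map] using eval₂_reflect_mul_pow (RingHom.id ℂ) z m p hp

theorem norm_eval_reflect_le (hp : p.natDegree ≤ m) (h : ∀ w : ℂ, ‖w‖ = 1 → ‖p.eval w‖ ≤ M)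
    {z : ℂ} (hz : ‖z‖ ≤ 1) : ‖(reflect m p).eval z‖ ≤ M := by
  refine norm_eval_le_of_norm_le_one (fun w hw => ?_) hz
  have hw0 : w ≠ 0 := norm_ne_zero_iff.mp (by simp [hw])
  have := eval_reflect_inv_mul_pow hp (inv_ne_zero hw0)
  rw [inv_inv] at this
  simpa [← this, hw] using h w⁻¹ (by simp [hw])

theorem norm_eval_le_mul_norm_pow (hp : p.natDegree ≤ m)
    (h : ∀ w : ℂ, ‖w‖ = 1 → ‖p.eval w‖ ≤ M) {z : ℂ} (hz : 1 ≤ ‖z‖) :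
    ‖p.eval z‖ ≤ M * ‖z‖ ^ m := by
  have hz0 : z ≠ 0 := norm_pos_iff.mp (one_pos.trans_le hz)
  rw [← eval_reflect_inv_mul_pow hp hz0, norm_mul, norm_pow]
  gcongr
  exact norm_eval_reflect_le hp h (by simpa using inv_le_one_of_one_le₀ hz)

theorem norm_coeff_le (hp : p.natDegree ≤ m) (h : ∀ w : ℂ, ‖w‖ = 1 → ‖p.eval w‖ ≤ M) :
    ‖p.coeff m‖ ≤ M := by
  have := norm_eval_reflect_le hp h (z := 0) (by simp)
  rwa [← coeff_zero_eq_eval_zero, coeff_reflect, revAt_le (Nat.zero_le m), Nat.sub_zero] at this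

theorem norm_lt_one_of_mem_roots_C_mul_X_pow_sub (hp : p.natDegree ≤ m)
    (h : ∀ w : ℂ, ‖w‖ = 1 → ‖p.eval w‖ ≤ M) {c : ℂ} (hc : M < ‖c‖) {ρ : ℂ}
    (hρ : ρ ∈ (C c * X ^ m - p).roots) : ‖ρ‖ < 1 := by
  by_contra! hρ1
  have hroot : c * ρ ^ m = p.eval ρ := by
    simpa [sub_eq_zero] using (mem_roots'.mp hρ).2
  have hpos : 0 < ‖ρ‖ ^ m := pow_pos (one_pos.trans_le hρ1) m
  have := norm_eval_le_mul_norm_pow hp h hρ1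
  rw [← hroot, norm_mul, norm_pow] at this
  nlinarith

theorem natDegree_C_mul_X_pow_sub (hp : p.natDegree ≤ m)
    (h : ∀ w : ℂ, ‖w‖ = 1 → ‖p.eval w‖ ≤ M) {c : ℂ} (hc : M < ‖c‖) :
    (C c * X ^ m - p).natDegree = m := by
  refine le_antisymm ((natDegree_sub_le _ _).trans (max_le (natDegree_C_mul_X_pow_le c m) hp))
    (le_natDegree_of_ne_zero ?_)
  have hcoeff := norm_coeff_le hp h
  rw [coeff_sub, coeff_C_mul_X_pow, if_pos rfl, sub_ne_zero]
  rintro rfl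
  linarith

theorem norm_natCast_mul_eval_sub_le (hm : 0 < m) (hp : p.natDegree ≤ m)
    (h : ∀ w : ℂ, ‖w‖ = 1 → ‖p.eval w‖ ≤ M) {z : ℂ} (hz : ‖z‖ = 1) {t : ℝ} (ht : M < t) :
    ‖(m : ℂ) * p.eval z - z * (derivative p).eval z‖ ≤ |m * t - ‖(derivative p).eval z‖| := by
  set d := (derivative p).eval z
  set u := exp (arg d * I)
  have hu : ‖u‖ = 1 := norm_exp_ofReal_mul_I _
  have hz0 : z ≠ 0 := norm_ne_zero_iff.mp (by simp [hz])
  have ht0 : 0 ≤ t := (norm_nonneg _).trans ((h z hz).trans ht.le)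
  -- `m c z ^ (m - 1) = m t u` points along `p'(z) = ‖p'(z)‖ u`
  set c : ℂ := t * u / z ^ (m - 1)
  have hc : ‖c‖ = t := by simp [c, hu, hz, abs_of_nonneg ht0]
  have hF := norm_natDegree_mul_eval_sub_le (p := C c * X ^ m - p) (z := z) fun ρ hρ =>
    hz ▸ (norm_lt_one_of_mem_roots_C_mul_X_pow_sub hp h (hc ▸ ht) hρ).le
  have hzm : z ^ (m - 1) * z = z ^ m := pow_sub_one_mul hm.ne' z
  have hlhs : (m : ℂ) * (C c * X ^ m - p).eval z - z * (derivative (C c * X ^ m - p)).eval z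
      = -((m : ℂ) * p.eval z - z * d) := by
    simp only [eval_sub, eval_mul, eval_C, eval_pow, eval_X, derivative_sub,
      derivative_C_mul_X_pow, d]
    rw [← hzm]
    ring
  have hrhs : z * (derivative (C c * X ^ m - p)).eval z = z * u * ((m * t - ‖d‖ : ℝ) : ℂ) := by
    simp only [eval_sub, eval_mul, eval_C, eval_pow, eval_X, derivative_sub,
      derivative_C_mul_X_pow, c]
    rw [show (derivative p).eval z = ‖d‖ * u from (norm_mul_exp_arg_mul_I d).symm]
    field_simp
    push_cast
    ring
  rwa [natDegree_C_mul_X_pow_sub hp h (hc ▸ ht), hlhs, norm_neg, hrhs, norm_mul, norm_mul, hz,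
    hu, norm_real, Real.norm_eq_abs, one_mul, one_mul] at hF

theorem norm_eval_derivative_add_norm_le (hp : p.natDegree ≤ m)
    (h : ∀ w : ℂ, ‖w‖ = 1 → ‖p.eval w‖ ≤ M) {z : ℂ} (hz : ‖z‖ = 1) :
    ‖(derivative p).eval z‖ + ‖(m : ℂ) * p.eval z - z * (derivative p).eval z‖ ≤ m * M := by
  rcases m.eq_zero_or_pos with rfl | hm
  · rw [eq_C_of_natDegree_eq_zero (Nat.le_zero.mp hp)]
    simp
  set r := ‖(derivative p).eval z‖
  set a := ‖(m : ℂ) * p.eval z - z * (derivative p).eval z‖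
  have hmpos : (0 : ℝ) < m := Nat.cast_pos.mpr hm
  have key := fun t (ht : M < t) => norm_natCast_mul_eval_sub_le hm hp h hz ht
  by_cases hr : r ≤ m * M
  · suffices (r + a) / m ≤ M by rwa [div_le_iff₀' hmpos] at this
    refine le_of_forall_gt_imp_ge_of_dense fun t ht => ?_
    have := key t ht
    rw [abs_of_nonneg (by nlinarith)] at this
    rw [div_le_iff₀' hmpos]
    linarith
  · have hra : r ≤ a + m * M := by
      calc r = ‖z * (derivative p).eval z‖ := by rw [norm_mul, hz, one_mul]
        _ ≤ a + ‖(m : ℂ) * p.eval z‖ :=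
          (norm_le_norm_sub_add _ ((m : ℂ) * p.eval z)).trans_eq (by rw [norm_sub_rev])
        _ ≤ a + m * M := by rw [norm_mul, Complex.norm_natCast]; gcongr; exact h z hz
    have := key (r / m) (by rw [lt_div_iff₀' hmpos]; linarith)
    rw [mul_div_cancel₀ _ hmpos.ne', sub_self, abs_zero] at this
    linarith

end UnitCircle

theorem eval_map_ofReal (P : ℝ[X]) (x : ℝ) : (P.map ofRealHom).eval (x : ℂ) = P.eval x := by
  rw [eval_map]
  exact eval₂_at_apply ofRealHom x

theorem add_inv_div_two_of_norm_eq_one {z : ℂ} (hz : ‖z‖ = 1) : (z + z⁻¹) / 2 = z.re := by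
  rw [inv_eq_conj hz, add_conj]
  push_cast
  ring

theorem sub_inv_div_two_of_norm_eq_one {z : ℂ} (hz : ‖z‖ = 1) : (z - z⁻¹) / 2 = z.im * I := by
  rw [inv_eq_conj hz, sub_conj]
  push_cast
  ring

/-- `joukowskiPullback n q` is `z ^ n * q ((z + z⁻¹) / 2)` (see `eval_of_ne_zero`); on the unit
circle it turns the trigonometric polynomial `q (cos θ)` into an algebraic one of degree `2 n`. -/
noncomputable def joukowskiPullback (n : ℕ) (q : ℂ[X]) : ℂ[X] :=
  ∑ k ∈ Finset.range (n + 1), C (q.coeff k / 2 ^ k) * X ^ (n - k) * (X ^ 2 + 1) ^ k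

namespace joukowskiPullback

variable {n : ℕ} {q : ℂ[X]} {z : ℂ}

theorem natDegree_le (n : ℕ) (q : ℂ[X]) : (joukowskiPullback n q).natDegree ≤ 2 * n := by
  refine natDegree_sum_le_of_forall_le _ _ fun k hk => ?_
  have hk : k ≤ n := Nat.lt_succ_iff.mp (Finset.mem_range.mp hk)
  have : (X ^ 2 + 1 : ℂ[X]).natDegree ≤ 2 := by compute_degree
  calc _ ≤ (C (q.coeff k / 2 ^ k) * X ^ (n - k)).natDegree + ((X ^ 2 + 1 : ℂ[X]) ^ k).natDegree :=
        natDegree_mul_le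
    _ ≤ (n - k) + k * 2 :=
        add_le_add (natDegree_C_mul_X_pow_le _ _) (natDegree_pow_le_of_le k this)
    _ ≤ 2 * n := by omega

theorem eval_of_ne_zero (hq : q.natDegree ≤ n) (hz : z ≠ 0) :
    (joukowskiPullback n q).eval z = z ^ n * q.eval ((z + z⁻¹) / 2) := by
  rw [eval_eq_sum_range' (Nat.lt_succ_of_le hq), joukowskiPullback, eval_finsetSum,
    Finset.mul_sum]
  refine Finset.sum_congr rfl fun k hk => ?_
  have hk : k ≤ n := Nat.lt_succ_iff.mp (Finset.mem_range.mp hk)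
  simp only [eval_mul, eval_pow, eval_C, eval_X, eval_add, eval_one]
  rw [show (z + z⁻¹) / 2 = (z ^ 2 + 1) / (2 * z) by field_simp, div_pow, mul_pow,
    ← Nat.sub_add_cancel hk, pow_add, Nat.add_sub_cancel]
  field_simp

theorem mul_eval_derivative_of_ne_zero (hq : q.natDegree ≤ n) (hz : z ≠ 0) :
    z * (derivative (joukowskiPullback n q)).eval z = z ^ n *
      (n * q.eval ((z + z⁻¹) / 2) + (z - z⁻¹) / 2 * (derivative q).eval ((z + z⁻¹) / 2)) := by
  have hloc : (fun w => (joukowskiPullback n q).eval w) =ᶠ[nhds z]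
      fun w => w ^ n * q.eval ((w + w⁻¹) / 2) :=
    Filter.eventually_of_mem (isOpen_ne.mem_nhds hz) fun w hw => eval_of_ne_zero hq hw
  have hderiv : HasDerivAt (fun w => w ^ n * q.eval ((w + w⁻¹) / 2)) _ z :=
    (hasDerivAt_pow n z).mul
      ((q.hasDerivAt _).comp z (((hasDerivAt_id z).add (hasDerivAt_inv hz)).div_const 2))
  rw [← Polynomial.deriv, hloc.deriv_eq, hderiv.deriv]
  rcases n with _ | n
  · field_simp
    ring
  · simp only [Nat.cast_add, Nat.cast_one, Nat.add_sub_cancel]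
    field_simp
    ring

variable {P : ℝ[X]}

theorem norm_eval_map_ofReal (hP : P.natDegree ≤ n) (hz : ‖z‖ = 1) :
    ‖(joukowskiPullback n (P.map ofRealHom)).eval z‖ = |P.eval z.re| := by
  have hz0 : z ≠ 0 := norm_ne_zero_iff.mp (by simp [hz])
  rw [eval_of_ne_zero (natDegree_map_le.trans hP) hz0, add_inv_div_two_of_norm_eq_one hz,
    eval_map_ofReal]
  simp [hz]

theorem mul_eval_derivative_map_ofReal_of_norm_eq_one (hP : P.natDegree ≤ n) (hz : ‖z‖ = 1) :
    let c : ℂ := (n * P.eval z.re : ℝ) + (z.im * (derivative P).eval z.re : ℝ) * I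
    z * (derivative (joukowskiPullback n (P.map ofRealHom))).eval z = z ^ n * c ∧
      ((2 * n : ℕ) : ℂ) * (joukowskiPullback n (P.map ofRealHom)).eval z -
        z * (derivative (joukowskiPullback n (P.map ofRealHom))).eval z = z ^ n * conj c := by
  have hz0 : z ≠ 0 := norm_ne_zero_iff.mp (by simp [hz])
  have hq := (natDegree_map_le (f := ofRealHom)).trans hP
  rw [mul_eval_derivative_of_ne_zero hq hz0, eval_of_ne_zero hq hz0,
    add_inv_div_two_of_norm_eq_one hz, sub_inv_div_two_of_norm_eq_one hz, derivative_map,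
    eval_map_ofReal, eval_map_ofReal]
  constructor
  · push_cast; ring
  · simp only [map_add, map_mul, conj_ofReal, conj_I]
    push_cast; ring

end joukowskiPullback

theorem szego_of_norm_eq_one {n : ℕ} {P : ℝ[X]} {z : ℂ} {M : ℝ} (hP : P.natDegree ≤ n)
    (hM : ∀ x ∈ Set.Icc (-1 : ℝ) 1, |P.eval x| ≤ M) (hz : ‖z‖ = 1) :
    (n * P.eval z.re) ^ 2 + (z.im * (derivative P).eval z.re) ^ 2 ≤ (n * M) ^ 2 := by
  obtain ⟨hder, hsub⟩ :=
    joukowskiPullback.mul_eval_derivative_map_ofReal_of_norm_eq_one hP hz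
  set c : ℂ := (n * P.eval z.re : ℝ) + (z.im * (derivative P).eval z.re : ℝ) * I
  have hbound : ∀ w : ℂ, ‖w‖ = 1 → ‖(joukowskiPullback n (P.map ofRealHom)).eval w‖ ≤ M :=
    fun w hw => joukowskiPullback.norm_eval_map_ofReal hP hw ▸
      hM _ (abs_le.mp ((abs_re_le_norm w).trans hw.le))
  have hmalik :=
    norm_eval_derivative_add_norm_le (joukowskiPullback.natDegree_le n _) hbound hz
  have hc : ‖(derivative (joukowskiPullback n (P.map ofRealHom))).eval z‖ = ‖c‖ := by
    rw [← one_mul ‖_‖, ← hz, ← norm_mul, hder, norm_mul, norm_pow, hz, one_pow, one_mul]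
  rw [hsub, norm_mul, norm_pow, hz, one_pow, one_mul, norm_conj, hc] at hmalik
  have hcn : ‖c‖ ≤ n * M := by push_cast at hmalik; linarith
  calc _ = ‖c‖ ^ 2 := by rw [Complex.sq_norm, normSq_add_mul_I]
    _ ≤ (n * M) ^ 2 := pow_le_pow_left₀ (norm_nonneg c) hcn 2

theorem szego_schaake_van_der_corput_general (n : ℕ) (P : Polynomial ℝ)
    (hP : P.degree ≤ n) (x : ℝ) (hx : x ∈ Set.Icc (-1 : ℝ) 1) :
    (1 - x ^ 2) * (Polynomial.derivative P).eval x ^ 2 + (n : ℝ) ^ 2 * P.eval x ^ 2 ≤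
      (n : ℝ) ^ 2 * (⨆ t : Set.Icc (-1 : ℝ) 1, |P.eval ↑t|) ^ 2 := by
  set M := ⨆ t : Set.Icc (-1 : ℝ) 1, |P.eval ↑t|
  have hM : ∀ t ∈ Set.Icc (-1 : ℝ) 1, |P.eval t| ≤ M := fun t ht =>
    le_ciSup (f := fun t : Set.Icc (-1 : ℝ) 1 => |P.eval ↑t|)
      (isCompact_range (by fun_prop)).bddAbove ⟨t, ht⟩
  have hx2 : 0 ≤ 1 - x ^ 2 := by nlinarith [hx.1, hx.2]
  set z : ℂ := ⟨x, √(1 - x ^ 2)⟩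
  have hz : ‖z‖ = 1 := by
    rw [norm_def, normSq_mk, ← sq, ← sq, Real.sq_sqrt hx2, add_sub_cancel, Real.sqrt_one]
  have := szego_of_norm_eq_one (natDegree_le_iff_degree_le.mpr hP) hM hz
  rw [mul_pow, mul_pow, mul_pow, Real.sq_sqrt hx2] at this
  linarith

/-- The Szegő–Schaake–van der Corput inequality: for a real polynomial `P` of degree at
most `n ≥ 1` and `x ∈ [−1,1]`,
`(1−x²) P'(x)² + n² P(x)² ≤ n² ‖P‖_{[−1,1]}²`. -/
theorem szego_schaake_van_der_corput (n : ℕ) (hn : 1 ≤ n) (P : Polynomial ℝ)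
    (hP : P.degree ≤ n) (x : ℝ) (hx : x ∈ Set.Icc (-1 : ℝ) 1) :
    (1 - x ^ 2) * (Polynomial.derivative P).eval x ^ 2 + (n : ℝ) ^ 2 * P.eval x ^ 2 ≤
      (n : ℝ) ^ 2 * (⨆ t : Set.Icc (-1 : ℝ) 1, |P.eval ↑t|) ^ 2 :=
  szego_schaake_van_der_corput_general n P hP x hx
end

section
/- Let P be a complex algebraic polynomial of degree at most n ≥ 1. Then for every z ∈ ℂ with |z| = 1, |P'(z)| ≤ n · sup_{|w|=1} |P(w)| (M. Riesz's inequality on the unit circle). -/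
/-!
Let `N = 2n + 1`, let `ω` be a primitive `N`-th root of unity and `S(u) = 1 + u + ⋯ + u^(n-1)`.
Averaging `R(ω^j) / ω^(jd)` over `j < N` extracts the coefficient of `X^d` of a polynomial `R` of
small degree. Since `S²` has coefficient `m` at `X^(2n-1-m)`, applying this to
`P(zX) S(X)²` with `d = 2n - 1` gives the interpolation formula
`N z P'(z) = ∑ⱼ P(z ωʲ) S(ωʲ)² / ω^(j(2n-1))`.
On the unit circle the weights have modulus `|S(ωʲ)|²`, and the same averaging (with `d = n - 1`,
using `|S(u)|² = S(u)² / u^(n-1)`) shows that they sum to `N n`. Hence `N |P'(z)| ≤ N n ‖P‖_{C₁}`.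
-/

open Complex Polynomial Finset ComplexConjugate

noncomputable def geomPoly (R : Type*) [Semiring R] (n : ℕ) : R[X] := ∑ k ∈ range n, X ^ k

section GeomPoly

variable {R : Type*}

section Semiring

variable [Semiring R]

theorem coeff_geomPoly (n i : ℕ) : (geomPoly R n).coeff i = if i < n then 1 else 0 := by
  simp [geomPoly, finsetSum_coeff, coeff_X_pow]

theorem natDegree_geomPoly_le (n : ℕ) : (geomPoly R n).natDegree ≤ n - 1 :=
  natDegree_sum_le_of_forall_le _ _ fun k hk =>
    (natDegree_X_pow_le k).trans (by simp at hk; omega)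

theorem coeff_geomPoly_sq {n m : ℕ} (hm : m ≤ n) :
    (geomPoly R n ^ 2).coeff (2 * n - 1 - m) = m := by
  have hfilter : {k ∈ range n | k ≤ 2 * n - 1 - m ∧ 2 * n - 1 - m - k < n} = Ico (n - m) n := by
    ext k; simp only [mem_filter, mem_range, mem_Ico]; omega
  rw [sq]
  nth_rw 1 [geomPoly]
  rw [sum_mul, finsetSum_coeff]
  simp only [coeff_X_pow_mul', coeff_geomPoly, ← ite_and, sum_boole, hfilter, Nat.card_Ico]
  congr; omega

theorem eval_geomPoly (n : ℕ) (x : R) : (geomPoly R n).eval x = ∑ k ∈ range n, x ^ k := by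
  simp [geomPoly, eval_finsetSum, eval_X_pow]

end Semiring

theorem coeff_mul_geomPoly_sq [CommSemiring R] {n : ℕ} {Q : R[X]} (hQ : Q.natDegree ≤ n) :
    (Q * geomPoly R n ^ 2).coeff (2 * n - 1) = (derivative Q).eval 1 := by
  rw [as_sum_range_C_mul_X_pow' Q (Nat.lt_succ_of_le hQ)]
  simp only [sum_mul, finsetSum_coeff, mul_assoc, coeff_C_mul, coeff_X_pow_mul', derivative_sum,
    derivative_C_mul_X_pow, eval_finsetSum]
  refine sum_congr rfl fun m hm => ?_
  rw [mem_range] at hm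
  rw [if_pos (by omega), coeff_geomPoly_sq (by omega)]
  simp

theorem norm_eval_geomPoly_sq {n : ℕ} {u : ℂ} (hu : ‖u‖ = 1) :
    (‖(geomPoly ℂ n).eval u‖ : ℂ) ^ 2 = (geomPoly ℂ n).eval u ^ 2 / u ^ (n - 1) := by
  have hu0 : u ≠ 0 := norm_ne_zero_iff.mp (by simp [hu])
  have hreflect : conj ((geomPoly ℂ n).eval u) * u ^ (n - 1) = (geomPoly ℂ n).eval u := by
    rw [eval_geomPoly, map_sum, sum_mul, ← sum_range_reflect]
    refine sum_congr rfl fun k hk => ?_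
    rw [mem_range] at hk
    rw [map_pow, ← inv_eq_conj hu, inv_pow, pow_sub₀ u hu0 (by omega)]
    field_simp
  rw [← mul_conj', eq_div_of_mul_eq (pow_ne_zero _ hu0) hreflect, mul_div_assoc', sq]

end GeomPoly

namespace IsPrimitiveRoot

variable {K : Type*} [Field K] {ω : K} {N : ℕ}

theorem sum_zpow_pow (hω : IsPrimitiveRoot ω N) {t : ℤ} (ht : t.natAbs < N) :
    ∑ j ∈ range N, (ω ^ t) ^ j = if t = 0 then (N : K) else 0 := by
  split_ifs with h
  · simp [h]
  · have hne : ω ^ t ≠ 1 := fun h1 =>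
      h (Int.eq_zero_of_dvd_of_natAbs_lt_natAbs ((hω.zpow_eq_one_iff_dvd t).mp h1) (by simpa))
    have hpow : (ω ^ t) ^ N = 1 := by
      rw [← zpow_natCast, ← zpow_mul, mul_comm, zpow_mul, zpow_natCast, hω.pow_eq_one, one_zpow]
    rw [geom_sum_eq hne, hpow, sub_self, zero_div]

theorem sum_eval_pow_div_pow (hω : IsPrimitiveRoot ω N) {R : K[X]} {d : ℕ} (hd : d < N)
    (hR : R.natDegree < N + d) :
    ∑ j ∈ range N, R.eval (ω ^ j) / (ω ^ j) ^ d = N * R.coeff d := by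
  have hω0 : ω ≠ 0 := hω.ne_zero (by omega)
  have hshift : ∀ j e : ℕ, (ω ^ j) ^ e / (ω ^ j) ^ d = (ω ^ ((e : ℤ) - d)) ^ j := fun j e => by
    rw [← zpow_natCast (ω ^ ((e : ℤ) - d)), ← zpow_mul, sub_mul, zpow_sub₀ hω0, ← Nat.cast_mul,
      ← Nat.cast_mul, zpow_natCast, zpow_natCast, ← pow_mul, ← pow_mul, mul_comm j, mul_comm j]
  calc ∑ j ∈ range N, R.eval (ω ^ j) / (ω ^ j) ^ d
      = ∑ e ∈ range (N + d), R.coeff e * ∑ j ∈ range N, (ω ^ ((e : ℤ) - d)) ^ j := by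
        simp only [eval_eq_sum_range' hR, sum_div, mul_div_assoc, hshift, mul_sum]
        exact sum_comm
    _ = ∑ e ∈ range (N + d), R.coeff e * if e = d then (N : K) else 0 := by
        refine sum_congr rfl fun e he => ?_
        rw [mem_range] at he
        simp only [hω.sum_zpow_pow (show ((e : ℤ) - d).natAbs < N by omega), sub_eq_zero,
          Nat.cast_inj]
    _ = N * R.coeff d := by
        rw [sum_eq_single_of_mem d (by simp; omega) fun e _ he => by simp [he], if_pos rfl,
          mul_comm]

theorem sum_eval_mul_geomPoly_sq (hω : IsPrimitiveRoot ω N) {n : ℕ} (hN : 2 * n < N) {P : K[X]}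
    (hP : P.natDegree ≤ n) (z : K) :
    ∑ j ∈ range N, P.eval (z * ω ^ j) * ((geomPoly K n).eval (ω ^ j) ^ 2 / (ω ^ j) ^ (2 * n - 1))
      = N * (z * (derivative P).eval z) := by
  set Q := P.comp (C z * X)
  have hQ : Q.natDegree ≤ n := natDegree_comp_le.trans <| by
    simpa using Nat.mul_le_mul hP ((natDegree_C_mul_le z X).trans natDegree_X_le)
  have hdeg : (Q * geomPoly K n ^ 2).natDegree < N + (2 * n - 1) :=
    (natDegree_mul_le.trans (add_le_add hQ
      (natDegree_pow_le.trans (Nat.mul_le_mul_left 2 (natDegree_geomPoly_le n))))).trans_lt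
      (by omega)
  calc _ = ∑ j ∈ range N, (Q * geomPoly K n ^ 2).eval (ω ^ j) / (ω ^ j) ^ (2 * n - 1) := by
        simp only [Q, eval_mul, eval_comp, eval_pow, eval_C, eval_X, mul_div_assoc]
    _ = N * (z * (derivative P).eval z) := by
        rw [hω.sum_eval_pow_div_pow (by omega) hdeg, coeff_mul_geomPoly_sq hQ, derivative_comp]
        simp

theorem sum_norm_eval_geomPoly_sq {ω : ℂ} (hω : IsPrimitiveRoot ω N) {n : ℕ} (hN : n < N) :
    ∑ j ∈ range N, ‖(geomPoly ℂ n).eval (ω ^ j)‖ ^ 2 = N * n := by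
  have hωj : ∀ j : ℕ, ‖ω ^ j‖ = 1 := fun j => by simp [hω.norm'_eq_one (by omega)]
  have hdeg : (geomPoly ℂ n ^ 2).natDegree < N + (n - 1) :=
    (natDegree_pow_le.trans (Nat.mul_le_mul_left 2 (natDegree_geomPoly_le n))).trans_lt (by omega)
  have hcoeff : (geomPoly ℂ n ^ 2).coeff (n - 1) = n := by
    simpa [show 2 * n - 1 - n = n - 1 by omega] using coeff_geomPoly_sq (R := ℂ) (le_refl n)
  have hcast : ((∑ j ∈ range N, ‖(geomPoly ℂ n).eval (ω ^ j)‖ ^ 2 : ℝ) : ℂ) = N * n := by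
    push_cast
    simp only [norm_eval_geomPoly_sq (hωj _), ← eval_pow]
    rw [hω.sum_eval_pow_div_pow (by omega) hdeg, hcoeff]
  exact_mod_cast hcast

end IsPrimitiveRoot

theorem Polynomial.norm_eval_derivative_le_of_norm_eval_le {n : ℕ} {P : ℂ[X]}
    (hP : P.natDegree ≤ n) {M : ℝ} (hM : ∀ w : ℂ, ‖w‖ = 1 → ‖P.eval w‖ ≤ M) {z : ℂ}
    (hz : ‖z‖ = 1) : ‖(derivative P).eval z‖ ≤ n * M := by
  set N := 2 * n + 1
  have hω := Complex.isPrimitiveRoot_exp N (by omega)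
  set ω := Complex.exp (2 * Real.pi * Complex.I / N)
  have hωj : ∀ j : ℕ, ‖ω ^ j‖ = 1 := fun j => by simp [hω.norm'_eq_one (by omega)]
  have hbound : (N : ℝ) * ‖(derivative P).eval z‖ ≤ N * (n * M) :=
    calc (N : ℝ) * ‖(derivative P).eval z‖ = ‖(N : ℂ) * (z * (derivative P).eval z)‖ := by
          simp [hz]
      _ = ‖∑ j ∈ range N, P.eval (z * ω ^ j) *
            ((geomPoly ℂ n).eval (ω ^ j) ^ 2 / (ω ^ j) ^ (2 * n - 1))‖ := by
          rw [hω.sum_eval_mul_geomPoly_sq (by omega) hP]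
      _ ≤ ∑ j ∈ range N, M * ‖(geomPoly ℂ n).eval (ω ^ j)‖ ^ 2 := by
          refine (norm_sum_le _ _).trans (sum_le_sum fun j _ => ?_)
          rw [norm_mul, norm_div, norm_pow, norm_pow, hωj, one_pow, div_one]
          exact mul_le_mul_of_nonneg_right (hM _ (by rw [norm_mul, hz, hωj, one_mul]))
            (by positivity)
      _ = N * (n * M) := by
          rw [← mul_sum, hω.sum_norm_eval_geomPoly_sq (by omega)]
          ring
  exact le_of_mul_le_mul_left hbound (by positivity)

theorem riesz_inequality_unit_circle_general (n : ℕ) (P : Polynomial ℂ)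
    (hP : P.degree ≤ n) (z : ℂ) (hz : ‖z‖ = 1) :
    ‖(Polynomial.derivative P).eval z‖ ≤
      (n : ℝ) * ⨆ w : {w : ℂ // ‖w‖ = 1}, ‖P.eval ↑w‖ := by
  have hbdd : BddAbove (Set.range fun w : {w : ℂ // ‖w‖ = 1} => ‖P.eval ↑w‖) :=
    ((isCompact_sphere (0 : ℂ) 1).bddAbove_image (f := fun w => ‖P.eval w‖)
      (continuous_norm.comp P.continuous).continuousOn).mono
      (Set.range_subset_iff.mpr fun w =>
        Set.mem_image_of_mem (fun w => ‖P.eval w‖) (by simpa using w.2))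
  exact norm_eval_derivative_le_of_norm_eval_le (natDegree_le_iff_degree_le.mpr hP)
    (fun w hw => le_ciSup hbdd ⟨w, hw⟩) hz

/-- M. Riesz's inequality on the unit circle: for a complex polynomial `P` of degree at
most `n ≥ 1` and `|z| = 1`, `|P'(z)| ≤ n · ‖P‖_{C₁}`. -/
theorem riesz_inequality_unit_circle (n : ℕ) (hn : 1 ≤ n) (P : Polynomial ℂ)
    (hP : P.degree ≤ n) (z : ℂ) (hz : ‖z‖ = 1) :
    ‖(Polynomial.derivative P).eval z‖ ≤
      (n : ℝ) * ⨆ w : {w : ℂ // ‖w‖ = 1}, ‖P.eval ↑w‖ :=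
  riesz_inequality_unit_circle_general n P hP z hz
end

section
/- Let T_n(x) = cos(n·arccos x) be the Chebyshev polynomial of degree n and let 1 ≤ k ≤ n. Then sup_{x∈[−1,1]} |T_n^{(k)}(x)| = n²(n²−1²)(n²−2²)···(n²−(k−1)²) / (1·3·5···(2k−1)), while sup_{x∈[−1,1]} |T_n(x)| = 1; that is, the Chebyshev polynomial attains equality in V. A. Markov's inequality. -/
/-!
Differentiating the Chebyshev equation `(1 - x²) T'' = x T' - n² T` `k` times gives
`(1 - x²) f'' = (2k + 1) x f' - (n² - k²) f` for `f = T⁽ᵏ⁾`. Evaluating at `x = 1` yields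
`(2k + 1) f'(1) = (n² - k²) f(1)`, hence `T⁽ᵏ⁾(1) = ∏ᵢ₍ₖ (n² - i²) / (2k - 1)!!`. For `k < n` the
energy `(n² - k²) f² + (1 - x²) f'²` decreases on `[-1, 0]` and increases on `[0, 1]`, so `|f|` is
largest at `±1`, and `|f(-1)| = |f(1)|` by the parity of `T_n`; for `k = n`, `f` is constant.
The case `k = 0` gives `‖T_n‖ = 1`.
-/

open Set Polynomial Finset

theorem Nat.doubleFactorial_two_mul_sub_one (k : ℕ) :
    (2 * k - 1).doubleFactorial = ∏ l ∈ range k, (2 * l + 1) := by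
  cases k with
  | zero => rfl
  | succ m =>
    rw [prod_range_succ', show 2 * (m + 1) - 1 = 2 * m + 1 by omega, doubleFactorial_eq_prod_odd]
    simp only [mul_zero, zero_add, mul_one, mul_add]

theorem ciSup_eq_of_forall_le_apply {ι α : Type*} [ConditionallyCompleteLattice α] {f : ι → α}
    (i₀ : ι) (h : ∀ i, f i ≤ f i₀) : ⨆ i, f i = f i₀ :=
  haveI : Nonempty ι := ⟨i₀⟩
  le_antisymm (ciSup_le h) (le_ciSup ⟨f i₀, forall_mem_range.2 h⟩ i₀)

theorem le_max_of_forall_mul_deriv_nonneg {f : ℝ → ℝ} (hf : Differentiable ℝ f)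
    (hf' : ∀ x, 0 ≤ x * deriv f x) {a b x : ℝ} (hx : x ∈ Icc a b) :
    f x ≤ max (f a) (f b) := by
  rcases le_or_gt 0 x with hx0 | hx0
  · have hmono : MonotoneOn f (Ici 0) :=
      monotoneOn_of_deriv_nonneg (convex_Ici 0) hf.continuous.continuousOn hf.differentiableOn
        fun y hy => by
          rw [interior_Ici] at hy
          exact (mul_nonneg_iff_of_pos_left hy).mp (hf' y)
    exact le_max_of_le_right (hmono hx0 (hx0.trans hx.2) hx.2)
  · have hanti : AntitoneOn f (Iic 0) :=
      antitoneOn_of_deriv_nonpos (convex_Iic 0) hf.continuous.continuousOn hf.differentiableOn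
        fun y hy => by
          rw [interior_Iic] at hy
          nlinarith [hf' y, mem_Iio.mp hy]
    exact le_max_of_le_left (hanti (hx.1.trans hx0.le) hx0.le hx.1)

/-- The energy `c p² + (1 - x²) p'²` has derivative `2 (a - 1) x p'²`, so on `[-1, 1]` it is
largest at the endpoints, where it equals `c p²`. -/
theorem sq_eval_le_max_of_ode {p : ℝ[X]} {a c : ℝ} (ha : 1 ≤ a) (hc : 0 < c)
    (hode : ∀ x, (1 - x ^ 2) * (derivative^[2] p).eval x =
      a * x * (derivative p).eval x - c * p.eval x)
    {x : ℝ} (hx : x ∈ Set.Icc (-1) 1) :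
    p.eval x ^ 2 ≤ max (p.eval (-1) ^ 2) (p.eval 1 ^ 2) := by
  set E : ℝ[X] := C c * p ^ 2 + (1 - X ^ 2) * derivative p ^ 2
  have hE : ∀ y, E.eval y = c * p.eval y ^ 2 + (1 - y ^ 2) * (derivative p).eval y ^ 2 := by
    intro y; simp [E]
  have hE' : ∀ y, 0 ≤ y * deriv (fun t => E.eval t) y := by
    intro y
    have hd : (derivative E).eval y = 2 * (a - 1) * y * (derivative p).eval y ^ 2 := by
      have := hode y
      simp only [Function.iterate_succ, Function.iterate_zero, Function.comp_apply, id] at this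
      simp only [E, derivative_add, derivative_mul, derivative_C, derivative_sq, derivative_sub,
        derivative_one, derivative_X, eval_add, eval_mul, eval_C, eval_neg, eval_X, eval_pow,
        eval_sub, eval_one, zero_mul, zero_add, zero_sub, mul_one, neg_mul]
      linear_combination 2 * (derivative p).eval y * this
    rw [Polynomial.deriv, hd]
    have : 0 ≤ a - 1 := by linarith
    nlinarith [sq_nonneg y, sq_nonneg (y * (derivative p).eval y)]
  have hmax := le_max_of_forall_mul_deriv_nonneg E.differentiable hE' hx
  have hcx : c * p.eval x ^ 2 ≤ E.eval x := by
    rw [hE]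
    have : 0 ≤ 1 - x ^ 2 := by nlinarith [hx.1, hx.2]
    nlinarith [sq_nonneg ((derivative p).eval x)]
  simp only [hE (-1), hE 1, neg_one_sq, one_pow, sub_self, zero_mul, add_zero,
    ← mul_max_of_nonneg _ _ hc.le] at hmax
  exact le_of_mul_le_mul_left (hcx.trans hmax) hc

theorem Polynomial.iterate_derivative_comp_neg_X {R : Type*} [CommRing R] (p : R[X]) (k : ℕ) :
    derivative^[k] (p.comp (-X)) = (-1) ^ k * (derivative^[k] p).comp (-X) := by
  induction k generalizing p with
  | zero => simp
  | succ k ih => simp [ih (derivative p), derivative_comp, pow_succ]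

namespace Polynomial.Chebyshev

theorem iterate_derivative_T_eval_neg {R : Type*} [CommRing R] [IsDomain R] [Infinite R]
    (n : ℤ) (k : ℕ) (x : R) :
    (-1) ^ k * (derivative^[k] (T R n)).eval (-x) =
      n.negOnePow * (derivative^[k] (T R n)).eval x := by
  have hT : (T R n).comp (-X) = ((n.negOnePow : ℤ) : R[X]) * T R n :=
    funext fun y => by simp
  have h := congr_arg (derivative^[k]) hT
  rw [iterate_derivative_comp_neg_X, iterate_derivative_intCast_mul] at h
  simpa using congr_arg (eval x) h

theorem iterate_derivative_T_self_eval_eq {R : Type*} [CommRing R] [IsDomain R] [NeZero (2 : R)]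
    (n : ℕ) (x y : R) :
    (derivative^[n] (T R n)).eval x = (derivative^[n] (T R n)).eval y := by
  have h : (derivative^[n] (T R n)).natDegree = 0 := by
    simpa [natDegree_T] using natDegree_iterate_derivative (T R n) n
  rw [eq_C_of_natDegree_eq_zero h, eval_C, eval_C]

theorem iterate_derivative_T_eval_one_eq_div_doubleFactorial {𝔽 : Type*} [Field 𝔽] [CharZero 𝔽]
    (n : ℤ) (k : ℕ) :
    (derivative^[k] (T 𝔽 n)).eval 1 =
      (∏ i ∈ range k, ((n : 𝔽) ^ 2 - (i : 𝔽) ^ 2)) / ((2 * k - 1).doubleFactorial : 𝔽) := by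
  rw [iterate_derivative_T_eval_one_eq_div, Nat.doubleFactorial_two_mul_sub_one]
  norm_cast

theorem abs_iterate_derivative_T_eval_le {n k : ℕ} (hkn : k ≤ n) {x : ℝ}
    (hx : x ∈ Set.Icc (-1) 1) :
    |(derivative^[k] (T ℝ n)).eval x| ≤ |(derivative^[k] (T ℝ n)).eval 1| := by
  rcases hkn.lt_or_eq with hlt | rfl
  · have hode (y : ℝ) : (1 - y ^ 2) * (derivative^[2] (derivative^[k] (T ℝ n))).eval y =
        (2 * k + 1) * y * (derivative (derivative^[k] (T ℝ n))).eval y -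
          ((n : ℝ) ^ 2 - (k : ℝ) ^ 2) * (derivative^[k] (T ℝ n)).eval y := by
      rw [← Function.iterate_add_apply, ← Function.iterate_succ_apply' derivative k, add_comm 2 k]
      exact_mod_cast one_sub_X_sq_mul_iterate_derivative_T_eval (n : ℤ) k y
    have hc : 0 < (n : ℝ) ^ 2 - (k : ℝ) ^ 2 := by
      have : (k : ℝ) < n := by exact_mod_cast hlt
      nlinarith [(k.cast_nonneg : (0 : ℝ) ≤ k)]
    have hsym := congr_arg abs (iterate_derivative_T_eval_neg (R := ℝ) n k 1)
    simp only [abs_mul, abs_pow, abs_neg, abs_one, one_pow, one_mul, Int.coe_negOnePow,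
      Int.natAbs_natCast] at hsym
    rw [← sq_le_sq]
    calc _ ≤ max ((derivative^[k] (T ℝ n)).eval (-1) ^ 2) ((derivative^[k] (T ℝ n)).eval 1 ^ 2) :=
          sq_eval_le_max_of_ode (le_add_of_nonneg_left (by positivity)) hc hode hx
      _ = _ := by rw [← sq_abs, hsym, sq_abs, max_self]
  · rw [iterate_derivative_T_self_eval_eq k x 1]

end Polynomial.Chebyshev

open Polynomial.Chebyshev in
theorem chebyshev_attains_va_markov_general (n k : ℕ) (hkn : k ≤ n) :
    (⨆ x : Set.Icc (-1 : ℝ) 1,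
        |((Polynomial.derivative)^[k] (Polynomial.Chebyshev.T ℝ (n : ℤ))).eval ↑x|) =
      (∏ i ∈ Finset.range k, ((n : ℝ) ^ 2 - (i : ℝ) ^ 2)) /
        (Nat.doubleFactorial (2 * k - 1) : ℝ) ∧
    (⨆ x : Set.Icc (-1 : ℝ) 1, |(Polynomial.Chebyshev.T ℝ (n : ℤ)).eval ↑x|) = 1 := by
  have markov_norm (k : ℕ) (hkn : k ≤ n) :
      (⨆ x : Set.Icc (-1 : ℝ) 1, |(derivative^[k] (T ℝ n)).eval ↑x|) =
        (∏ i ∈ range k, ((n : ℝ) ^ 2 - (i : ℝ) ^ 2)) / ((2 * k - 1).doubleFactorial : ℝ) := by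
    have hprod : 0 ≤ ∏ i ∈ range k, ((n : ℝ) ^ 2 - (i : ℝ) ^ 2) :=
      prod_nonneg fun i hi => sub_nonneg.2 <| pow_le_pow_left₀ i.cast_nonneg
        (by exact_mod_cast (mem_range.1 hi).le.trans hkn) 2
    rw [ciSup_eq_of_forall_le_apply
      (f := fun x : Set.Icc (-1 : ℝ) 1 => |(derivative^[k] (T ℝ n)).eval ↑x|) ⟨1, by norm_num⟩
      fun x => abs_iterate_derivative_T_eval_le hkn x.2,
      iterate_derivative_T_eval_one_eq_div_doubleFactorial, abs_of_nonneg (by positivity)]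
    simp only [Int.cast_natCast]
  exact ⟨markov_norm k hkn, by simpa using markov_norm 0 n.zero_le⟩

/-- The Chebyshev polynomial `T_n(x) = cos(n arccos x)` attains equality in
V. A. Markov's inequality: for `1 ≤ k ≤ n`,
`‖T_n⁽ᵏ⁾‖_{[−1,1]} = n²(n²−1²)⋯(n²−(k−1)²)/(2k−1)!!` while `‖T_n‖_{[−1,1]} = 1`. -/
theorem chebyshev_attains_va_markov (n k : ℕ) (hk : 1 ≤ k) (hkn : k ≤ n) :
    (⨆ x : Set.Icc (-1 : ℝ) 1,
        |((Polynomial.derivative)^[k] (Polynomial.Chebyshev.T ℝ (n : ℤ))).eval ↑x|) =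
      (∏ i ∈ Finset.range k, ((n : ℝ) ^ 2 - (i : ℝ) ^ 2)) /
        (Nat.doubleFactorial (2 * k - 1) : ℝ) ∧
    (⨆ x : Set.Icc (-1 : ℝ) 1, |(Polynomial.Chebyshev.T ℝ (n : ℤ)).eval ↑x|) = 1 :=
  chebyshev_attains_va_markov_general n k hkn
end

section
/- Let α, β > −1, let w(x) = (1+x)^α (1−x)^β be the Jacobi weight on (−1,1), and let P be a real algebraic polynomial of degree at most n ≥ 1. Then ∫_{−1}^1 (1−x²)·P'(x)² · w(x) dx ≤ n(n+1+α+β) · ∫_{−1}^1 P(x)² · w(x) dx (the Guessab–Milovanović inequality). -/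
/-!
The Jacobi operator `L q = ((α + β + 2) x + β - α) q' - (1 - x²) q''` satisfies
`⟨p, L q⟩ = ∫ (1 - x²) p' q' w` for the weighted inner product `⟨p, q⟩ = ∫ p q w`: integrate by
parts against `(1 + x)^(α+1) (1 - x)^(β+1) = (1 - x²) w`, which vanishes at `±1` because
`α, β > -1`. Hence `L` is symmetric. It preserves the polynomials of degree `≤ n` and is upper
triangular in the monomial basis with diagonal entries `λ_k = k (k + 1 + α + β)`, which increase
with `k`; so every eigenvalue of `L` on this space is at most `λ_n`, and the spectral theorem gives
`∫ (1 - x²) P'² w = ⟨L P, P⟩ ≤ λ_n ⟨P, P⟩`.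
-/

open Real Set Polynomial MeasureTheory
open scoped RealInnerProductSpace

theorem LinearMap.IsSymmetric.inner_map_self_le_of_forall_hasEigenvalue_le
    {E : Type*} [NormedAddCommGroup E] [InnerProductSpace ℝ E] [FiniteDimensional ℝ E]
    {T : E →ₗ[ℝ] E} (hT : T.IsSymmetric) {Λ : ℝ}
    (hΛ : ∀ μ, Module.End.HasEigenvalue T μ → μ ≤ Λ) (v : E) :
    ⟪T v, v⟫ ≤ Λ * ⟪v, v⟫ := by
  let b := hT.eigenvectorBasis rfl
  have parseval (x y : E) : ⟪x, y⟫ = ∑ i, b.repr x i * b.repr y i := by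
    rw [← b.repr.inner_map_map, PiLp.inner_apply]
    exact Finset.sum_congr rfl fun i _ => by simp [mul_comm]
  rw [parseval, parseval, Finset.mul_sum]
  refine Finset.sum_le_sum fun i _ => ?_
  rw [hT.eigenvectorBasis_apply_self_apply, mul_assoc]
  exact mul_le_mul_of_nonneg_right (hΛ _ (hT.hasEigenvalue_eigenvalues rfl i))
    (mul_self_nonneg _)

theorem Real.rpow_le_max_one_rpow {t b : ℝ} (γ : ℝ) (h1 : 1 ≤ t) (h2 : t ≤ b) :
    t ^ γ ≤ max 1 (b ^ γ) := by
  rcases le_total 0 γ with hγ | hγ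
  · exact (rpow_le_rpow (by linarith) h2 hγ).trans (le_max_right _ _)
  · exact (rpow_le_one_of_one_le_of_nonpos h1 hγ).trans (le_max_left _ _)

theorem Polynomial.coeff_X_mul_derivative {R : Type*} [Semiring R] (p : R[X]) (k : ℕ) :
    (X * derivative p).coeff k = k * p.coeff k := by
  cases k with
  | zero => simp
  | succ k => rw [coeff_X_mul, coeff_derivative, ← Nat.cast_succ, Nat.cast_comm]

theorem Polynomial.coeff_X_sq_mul_derivative_derivative {R : Type*} [CommRing R] (p : R[X])
    (k : ℕ) : (X ^ 2 * derivative (derivative p)).coeff k = k * (k - 1) * p.coeff k := by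
  rw [coeff_X_pow_mul']
  split_ifs with hk
  · obtain ⟨m, rfl⟩ := Nat.exists_eq_add_of_le' hk
    rw [Nat.add_sub_cancel, coeff_derivative, coeff_derivative]
    push_cast
    ring
  · interval_cases k <;> simp

noncomputable def jacobiWeight (α β x : ℝ) : ℝ := (1 + x) ^ α * (1 - x) ^ β

noncomputable def jacobiOp (α β : ℝ) : ℝ[X] →ₗ[ℝ] ℝ[X] :=
  (LinearMap.mulLeft ℝ (C (α + β + 2) * X + C (β - α))).comp derivative
    - (LinearMap.mulLeft ℝ (1 - X ^ 2)).comp (derivative.comp derivative)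

def jacobiEigenvalue (α β : ℝ) (k : ℕ) : ℝ := k * (k + 1 + α + β)

noncomputable def jacobiInner (α β : ℝ) (p q : ℝ[X]) : ℝ :=
  ∫ x in Ioo (-1) 1, p.eval x * q.eval x * jacobiWeight α β x

section Jacobi

variable {α β : ℝ}

theorem jacobiWeight_pos {x : ℝ} (hx : x ∈ Ioo (-1) 1) : 0 < jacobiWeight α β x :=
  mul_pos (rpow_pos_of_pos (by linarith [hx.1]) α) (rpow_pos_of_pos (by linarith [hx.2]) β)

theorem continuous_jacobiWeight (hα : 0 ≤ α) (hβ : 0 ≤ β) : Continuous (jacobiWeight α β) :=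
  ((continuous_rpow_const hα).comp (continuous_const.add continuous_id)).mul
    ((continuous_rpow_const hβ).comp (continuous_const.sub continuous_id))

theorem jacobiWeight_neg_one (hα : α ≠ 0) : jacobiWeight α β (-1) = 0 := by
  simp [jacobiWeight, zero_rpow hα]

theorem jacobiWeight_one (hβ : β ≠ 0) : jacobiWeight α β 1 = 0 := by
  simp [jacobiWeight, zero_rpow hβ]

theorem jacobiWeight_add_one {x : ℝ} (hx : x ∈ Ioo (-1) 1) :
    jacobiWeight (α + 1) (β + 1) x = (1 - x ^ 2) * jacobiWeight α β x := by
  rw [jacobiWeight, jacobiWeight, rpow_add_one (by linarith [hx.1]) α,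
    rpow_add_one (by linarith [hx.2]) β]
  ring

theorem hasDerivAt_jacobiWeight_add_one {x : ℝ} (hx : x ∈ Ioo (-1) 1) :
    HasDerivAt (jacobiWeight (α + 1) (β + 1))
      (-((α + β + 2) * x + (β - α)) * jacobiWeight α β x) x := by
  have h1x : 0 < 1 + x := by linarith [hx.1]
  have h2x : 0 < 1 - x := by linarith [hx.2]
  have hleft := ((hasDerivAt_id x).const_add 1).rpow_const (p := α + 1) (.inl h1x.ne')
  have hright := ((hasDerivAt_id x).const_sub 1).rpow_const (p := β + 1) (.inl h2x.ne')
  refine (hleft.mul hright).congr_deriv ?_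
  simp only [jacobiWeight, id, add_sub_cancel_right, rpow_add_one h1x.ne', rpow_add_one h2x.ne']
  ring

theorem intervalIntegrable_jacobiWeight (hα : -1 < α) (hβ : -1 < β) :
    IntervalIntegrable (jacobiWeight α β) volume (-1) 1 := by
  have hleft : IntervalIntegrable (fun x : ℝ => (1 + x) ^ α) volume (-1) 1 := by
    have := (intervalIntegral.intervalIntegrable_rpow' (a := 0) (b := 2) hα).comp_add_left 1
    norm_num at this
    exact this
  have hright : IntervalIntegrable (fun x : ℝ => (1 - x) ^ β) volume (-1) 1 := by
    have := (intervalIntegral.intervalIntegrable_rpow' (a := 2) (b := 0) hβ).comp_sub_left 1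
    norm_num at this
    exact this
  have hmeas : Measurable (jacobiWeight α β) := by unfold jacobiWeight; fun_prop
  -- each factor is bounded on the half of `(-1, 1)` away from its own singular endpoint
  set M : ℝ := max (max 1 (2 ^ α)) (max 1 (2 ^ β))
  refine ((hleft.add hright).const_mul M).mono_fun hmeas.aestronglyMeasurable ?_
  rw [uIoc_of_le (by norm_num)]
  refine (ae_restrict_iff' measurableSet_Ioc).2 (.of_forall fun x hx => ?_)
  have h1x : 0 ≤ 1 + x := by linarith [hx.1]
  have h2x : 0 ≤ 1 - x := by linarith [hx.2]
  have hw : 0 ≤ jacobiWeight α β x := mul_nonneg (rpow_nonneg h1x α) (rpow_nonneg h2x β)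
  have hM : 0 ≤ M := le_max_of_le_left (le_max_of_le_left zero_le_one)
  dsimp only
  rw [Real.norm_of_nonneg hw, Real.norm_of_nonneg
    (mul_nonneg hM (add_nonneg (rpow_nonneg h1x α) (rpow_nonneg h2x β)))]
  rcases le_total x 0 with hx0 | hx0
  · calc jacobiWeight α β x ≤ (1 + x) ^ α * M :=
          mul_le_mul_of_nonneg_left ((rpow_le_max_one_rpow β (by linarith) (by linarith)).trans
            (le_max_right _ _)) (rpow_nonneg h1x α)
      _ ≤ _ := by nlinarith [rpow_nonneg h2x β, rpow_nonneg h1x α]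
  · calc jacobiWeight α β x ≤ M * (1 - x) ^ β :=
          mul_le_mul_of_nonneg_right ((rpow_le_max_one_rpow α (by linarith) (by linarith)).trans
            (le_max_left _ _)) (rpow_nonneg h2x β)
      _ ≤ _ := by nlinarith [rpow_nonneg h2x β, rpow_nonneg h1x α]

theorem intervalIntegrable_eval_mul_jacobiWeight (hα : -1 < α) (hβ : -1 < β) (p : ℝ[X]) :
    IntervalIntegrable (fun x => p.eval x * jacobiWeight α β x) volume (-1) 1 :=
  (intervalIntegrable_jacobiWeight hα hβ).continuousOn_mul p.continuous.continuousOn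

theorem integrableOn_eval_mul_jacobiWeight (hα : -1 < α) (hβ : -1 < β) (p : ℝ[X]) :
    IntegrableOn (fun x => p.eval x * jacobiWeight α β x) (Ioo (-1) 1) :=
  (intervalIntegrable_iff_integrableOn_Ioo_of_le (by norm_num)).1
    (intervalIntegrable_eval_mul_jacobiWeight hα hβ p)

theorem integrableOn_eval_mul_eval_mul_jacobiWeight (hα : -1 < α) (hβ : -1 < β) (p q : ℝ[X]) :
    IntegrableOn (fun x => p.eval x * q.eval x * jacobiWeight α β x) (Ioo (-1) 1) := by
  simpa only [eval_mul] using integrableOn_eval_mul_jacobiWeight hα hβ (p * q)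

theorem jacobiOp_apply (q : ℝ[X]) : jacobiOp α β q =
    (C (α + β + 2) * X + C (β - α)) * derivative q - (1 - X ^ 2) * derivative (derivative q) :=
  rfl

theorem coeff_jacobiOp (q : ℝ[X]) (k : ℕ) :
    (jacobiOp α β q).coeff k = jacobiEigenvalue α β k * q.coeff k
      + (β - α) * (k + 1) * q.coeff (k + 1) - (k + 1) * (k + 2) * q.coeff (k + 2) := by
  have h : jacobiOp α β q = C (α + β + 2) * (X * derivative q) + C (β - α) * derivative q
      - derivative (derivative q) + X ^ 2 * derivative (derivative q) := by
    rw [jacobiOp_apply]; ring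
  rw [h, coeff_add, coeff_sub, coeff_add, coeff_C_mul, coeff_C_mul, coeff_X_mul_derivative,
    coeff_X_sq_mul_derivative_derivative, coeff_derivative, coeff_derivative, coeff_derivative,
    jacobiEigenvalue]
  push_cast
  ring

theorem jacobiOp_mem_degreeLT {N : ℕ} {q : ℝ[X]} (hq : q ∈ degreeLT ℝ N) :
    jacobiOp α β q ∈ degreeLT ℝ N := by
  rw [mem_degreeLT, degree_lt_iff_coeff_zero] at hq ⊢
  intro m hm
  rw [coeff_jacobiOp, hq m hm, hq (m + 1) (by omega), hq (m + 2) (by omega)]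
  ring

theorem eq_jacobiEigenvalue_of_jacobiOp_eq_smul {q : ℝ[X]} (hq : q ≠ 0) {μ : ℝ}
    (h : jacobiOp α β q = μ • q) : μ = jacobiEigenvalue α β q.natDegree := by
  have hcoeff := congrArg (coeff · q.natDegree) h
  simp only [coeff_jacobiOp, coeff_smul, smul_eq_mul,
    coeff_eq_zero_of_natDegree_lt (Nat.lt_add_of_pos_right one_pos),
    coeff_eq_zero_of_natDegree_lt (Nat.lt_add_of_pos_right two_pos)] at hcoeff
  have hlc : q.leadingCoeff ≠ 0 := leadingCoeff_ne_zero.2 hq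
  exact (mul_right_cancel₀ hlc (by rw [leadingCoeff]; linear_combination hcoeff)).symm

theorem jacobiEigenvalue_monotone (hα : -1 < α) (hβ : -1 < β) :
    Monotone (jacobiEigenvalue α β) := by
  intro d n h
  rcases h.eq_or_lt with rfl | hlt
  · rfl
  · have : (d : ℝ) + 1 ≤ n := by exact_mod_cast hlt
    simp only [jacobiEigenvalue]
    nlinarith

theorem integral_one_sub_sq_mul_derivative_mul_derivative (hα : -1 < α) (hβ : -1 < β)
    (p q : ℝ[X]) :
    ∫ x in Ioo (-1) 1, (1 - x ^ 2) * (derivative p).eval x * (derivative q).eval x *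
      jacobiWeight α β x = jacobiInner α β p (jacobiOp α β q) := by
  set R := (1 - X ^ 2) * derivative p * derivative q - p * jacobiOp α β q
  have hderiv : ∀ x ∈ Ioo (-1 : ℝ) 1, HasDerivAt
      (fun y => jacobiWeight (α + 1) (β + 1) y * (p * derivative q).eval y)
      (R.eval x * jacobiWeight α β x) x := fun x hx =>
    ((hasDerivAt_jacobiWeight_add_one hx).mul ((p * derivative q).hasDerivAt x)).congr_deriv (by
      simp only [R, jacobiWeight_add_one hx, jacobiOp_apply, derivative_mul, eval_mul, eval_sub,
        eval_add, eval_one, eval_pow, eval_X, eval_C]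
      ring)
  have hR : ∫ x in Ioo (-1) 1, R.eval x * jacobiWeight α β x = 0 := by
    have hcont : Continuous fun y => jacobiWeight (α + 1) (β + 1) y * (p * derivative q).eval y :=
      (continuous_jacobiWeight (by linarith) (by linarith)).mul (p * derivative q).continuous
    have := intervalIntegral.integral_eq_sub_of_hasDerivAt_of_le (by norm_num) hcont.continuousOn
      hderiv (intervalIntegrable_eval_mul_jacobiWeight hα hβ R)
    rwa [jacobiWeight_one (by linarith), jacobiWeight_neg_one (by linarith), zero_mul, zero_mul,
      sub_zero, intervalIntegral.integral_of_le (by norm_num), integral_Ioc_eq_integral_Ioo] at this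
  rw [← sub_eq_zero, jacobiInner, ← integral_sub, ← hR]
  · refine setIntegral_congr_fun measurableSet_Ioo fun x _ => ?_
    simp only [R, eval_mul, eval_sub, eval_one, eval_pow, eval_X]
    ring
  · refine (integrableOn_eval_mul_jacobiWeight hα hβ
      ((1 - X ^ 2) * derivative p * derivative q)).congr_fun (fun x _ => ?_) measurableSet_Ioo
    simp only [eval_mul, eval_sub, eval_one, eval_pow, eval_X]
  · refine (integrableOn_eval_mul_jacobiWeight hα hβ (p * jacobiOp α β q)).congr_fun
      (fun x _ => ?_) measurableSet_Ioo
    simp only [eval_mul]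

theorem jacobiInner_comm (p q : ℝ[X]) : jacobiInner α β p q = jacobiInner α β q p := by
  simp only [jacobiInner, mul_comm (p.eval _)]

theorem jacobiInner_jacobiOp_comm (hα : -1 < α) (hβ : -1 < β) (p q : ℝ[X]) :
    jacobiInner α β (jacobiOp α β p) q = jacobiInner α β p (jacobiOp α β q) := by
  rw [jacobiInner_comm, ← integral_one_sub_sq_mul_derivative_mul_derivative hα hβ,
    ← integral_one_sub_sq_mul_derivative_mul_derivative hα hβ]
  simp only [mul_right_comm _ ((derivative p).eval _)]

theorem jacobiInner_add_left (hα : -1 < α) (hβ : -1 < β) (p₁ p₂ q : ℝ[X]) :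
    jacobiInner α β (p₁ + p₂) q = jacobiInner α β p₁ q + jacobiInner α β p₂ q := by
  rw [jacobiInner, jacobiInner, jacobiInner, ← integral_add
    (integrableOn_eval_mul_eval_mul_jacobiWeight hα hβ p₁ q)
    (integrableOn_eval_mul_eval_mul_jacobiWeight hα hβ p₂ q)]
  simp only [eval_add, add_mul]

theorem jacobiInner_smul_left (r : ℝ) (p q : ℝ[X]) :
    jacobiInner α β (r • p) q = r * jacobiInner α β p q := by
  rw [jacobiInner, jacobiInner, ← integral_const_mul]
  simp only [eval_smul, smul_eq_mul, mul_assoc]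

theorem jacobiInner_self_nonneg (p : ℝ[X]) : 0 ≤ jacobiInner α β p p :=
  setIntegral_nonneg measurableSet_Ioo fun _ hx =>
    mul_nonneg (mul_self_nonneg _) (jacobiWeight_pos hx).le

theorem eq_zero_of_jacobiInner_self_eq_zero (hα : -1 < α) (hβ : -1 < β) {p : ℝ[X]}
    (h : jacobiInner α β p p = 0) : p = 0 := by
  by_contra hp
  have hae : ∀ᵐ x, x ∈ Ioo (-1 : ℝ) 1 → p.eval x * p.eval x * jacobiWeight α β x = 0 := by
    rw [← ae_restrict_iff' measurableSet_Ioo]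
    refine (setIntegral_eq_zero_iff_of_nonneg_ae ((ae_restrict_iff' measurableSet_Ioo).2
      (.of_forall fun x hx => ?_)) (integrableOn_eval_mul_eval_mul_jacobiWeight hα hβ p p)).1 h
    exact mul_nonneg (mul_self_nonneg _) (jacobiWeight_pos hx).le
  have hroots : ∀ᵐ x, ¬ p.IsRoot x :=
    measure_eq_zero_iff_ae_notMem.1 ((p.finite_setOfPred_isRoot hp).measure_zero _)
  have hIoo : ∀ᵐ x, x ∉ Ioo (-1 : ℝ) 1 := by
    filter_upwards [hae, hroots] with x hx hroot hmem
    exact hroot (mul_self_eq_zero.1 ((mul_eq_zero.1 (hx hmem)).resolve_right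
      (jacobiWeight_pos hmem).ne'))
  have := measure_eq_zero_iff_ae_notMem.2 hIoo
  norm_num at this

noncomputable abbrev jacobiInnerProductCore (hα : -1 < α) (hβ : -1 < β)
    (V : Submodule ℝ ℝ[X]) : InnerProductSpace.Core ℝ V where
  inner p q := jacobiInner α β p q
  conj_inner_symm p q := jacobiInner_comm q p
  re_inner_nonneg p := jacobiInner_self_nonneg p
  add_left p q r := jacobiInner_add_left hα hβ p q r
  smul_left p q r := jacobiInner_smul_left r p q
  definite _ hp := Subtype.ext (eq_zero_of_jacobiInner_self_eq_zero hα hβ hp)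

theorem jacobiInner_jacobiOp_self_le (hα : -1 < α) (hβ : -1 < β) {n : ℕ} {P : ℝ[X]}
    (hP : P.degree ≤ n) :
    jacobiInner α β P (jacobiOp α β P) ≤ jacobiEigenvalue α β n * jacobiInner α β P P := by
  let V := degreeLT ℝ (n + 1)
  have hV (p : ℝ[X]) : p ∈ V ↔ p.degree ≤ n := by
    rw [← mem_degreeLE, ← degreeLT_succ_eq_degreeLE]
  let := (jacobiInnerProductCore hα hβ V).toNormedAddCommGroup
  let := InnerProductSpace.ofCore (jacobiInnerProductCore hα hβ V).toCore
  let T : V →ₗ[ℝ] V := (jacobiOp α β).restrict fun _ => jacobiOp_mem_degreeLT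
  have hT : T.IsSymmetric := fun p q => jacobiInner_jacobiOp_comm hα hβ p q
  have hΛ : ∀ μ, Module.End.HasEigenvalue T μ → μ ≤ jacobiEigenvalue α β n := by
    intro μ hμ
    obtain ⟨u, hu⟩ := hμ.exists_hasEigenvector
    have hu0 : (u : ℝ[X]) ≠ 0 := fun h => hu.2 (Subtype.ext h)
    rw [eq_jacobiEigenvalue_of_jacobiOp_eq_smul hu0 (congrArg Subtype.val hu.apply_eq_smul)]
    exact jacobiEigenvalue_monotone hα hβ (natDegree_le_of_degree_le ((hV u).1 u.2))
  rw [← jacobiInner_jacobiOp_comm hα hβ]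
  exact hT.inner_map_self_le_of_forall_hasEigenvalue_le hΛ ⟨P, (hV P).2 hP⟩

end Jacobi

theorem guessab_milovanovic_general (α β : ℝ) (hα : -1 < α) (hβ : -1 < β)
    (w : ℝ → ℝ) (hw : ∀ x, w x = (1 + x) ^ α * (1 - x) ^ β)
    (n : ℕ) (P : Polynomial ℝ) (hP : P.degree ≤ n) :
    (∫ x in Set.Ioo (-1 : ℝ) 1, (1 - x ^ 2) * (Polynomial.derivative P).eval x ^ 2 * w x) ≤
      (n : ℝ) * ((n : ℝ) + 1 + α + β) * ∫ x in Set.Ioo (-1 : ℝ) 1, P.eval x ^ 2 * w x := by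
  obtain rfl : w = jacobiWeight α β := funext hw
  calc ∫ x in Ioo (-1) 1, (1 - x ^ 2) * (derivative P).eval x ^ 2 * jacobiWeight α β x
      = jacobiInner α β P (jacobiOp α β P) := by
        rw [← integral_one_sub_sq_mul_derivative_mul_derivative hα hβ]
        simp only [sq, mul_assoc]
    _ ≤ jacobiEigenvalue α β n * jacobiInner α β P P := jacobiInner_jacobiOp_self_le hα hβ hP
    _ = _ := by simp only [jacobiEigenvalue, jacobiInner, sq]

/-- The Guessab–Milovanović inequality: for a Jacobi weight
`w(x) = (1+x)^α (1−x)^β` with `α, β > −1` and a real polynomial `P` of degree at most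
`n ≥ 1`,
`∫_{−1}^1 (1−x²) P'(x)² w(x) dx ≤ n(n+1+α+β) ∫_{−1}^1 P(x)² w(x) dx`. -/
theorem guessab_milovanovic (α β : ℝ) (hα : -1 < α) (hβ : -1 < β)
    (w : ℝ → ℝ) (hw : ∀ x, w x = (1 + x) ^ α * (1 - x) ^ β)
    (n : ℕ) (hn : 1 ≤ n) (P : Polynomial ℝ) (hP : P.degree ≤ n) :
    (∫ x in Set.Ioo (-1 : ℝ) 1, (1 - x ^ 2) * (Polynomial.derivative P).eval x ^ 2 * w x) ≤
      (n : ℝ) * ((n : ℝ) + 1 + α + β) * ∫ x in Set.Ioo (-1 : ℝ) 1, P.eval x ^ 2 * w x :=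
  guessab_milovanovic_general α β hα hβ w hw n P hP
end

section
/- Let P be a real algebraic polynomial of degree at most n ≥ 1. Then ∫_{−1}^1 √(1−x²) · P'(x)² dx ≤ n² · ∫_{−1}^1 P(x)² / √(1−x²) dx (the weighted L²-Bernstein inequality for the Chebyshev weight, i.e., the case α = β = −1/2 of the Guessab–Milovanović inequality). -/
open Real Set Polynomial MeasureTheory

/-!
Substituting `x = cos θ` turns the two sides into `∫₀^π (sin θ · P'(cos θ))² dθ` and
`n² ∫₀^π P(cos θ)² dθ`. Expanding `P = ∑_{k ≤ n} a_k T_k` in the Chebyshev basis gives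
`P(cos θ) = ∑ a_k cos kθ` and `sin θ · P'(cos θ) = ∑ k a_k sin kθ`. Both families are orthogonal
on `[0, π]`, so the sides become `∑ k² a_k² ∫ sin² kθ` and `n² ∑ a_k² ∫ cos² kθ`, and
`∫₀^π sin² kθ ≤ ∫₀^π cos² kθ` finishes the comparison term by term.
-/

theorem MeasureTheory.integral_sq_sum_of_orthogonal {α ι : Type*} [MeasurableSpace α]
    {μ : Measure α} (s : Finset ι) (c : ι → ℝ) (g : ι → α → ℝ)
    (hint : ∀ i ∈ s, ∀ j ∈ s, Integrable (fun x ↦ g i x * g j x) μ)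
    (horth : ∀ i ∈ s, ∀ j ∈ s, i ≠ j → ∫ x, g i x * g j x ∂μ = 0) :
    ∫ x, (∑ i ∈ s, c i * g i x) ^ 2 ∂μ = ∑ i ∈ s, c i ^ 2 * ∫ x, g i x ^ 2 ∂μ := by
  have hexpand (x : α) : (∑ i ∈ s, c i * g i x) ^ 2
      = ∑ i ∈ s, ∑ j ∈ s, c i * c j * (g i x * g j x) := by
    rw [sq, Finset.sum_mul_sum]
    exact Finset.sum_congr rfl fun i _ ↦ Finset.sum_congr rfl fun j _ ↦ by ring
  simp_rw [hexpand]
  rw [integral_finsetSum _ fun i hi ↦ integrable_finsetSum _ fun j hj ↦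
    (hint i hi j hj).const_mul _]
  refine Finset.sum_congr rfl fun i hi ↦ ?_
  rw [integral_finsetSum _ fun j hj ↦ (hint i hi j hj).const_mul _,
    Finset.sum_eq_single_of_mem i hi fun j hj hji ↦ by
      rw [integral_const_mul, horth i hi j hj hji.symm, mul_zero],
    integral_const_mul]
  simp_rw [← sq]

theorem integral_cos_intCast_mul_eq_zero {m : ℤ} (hm : m ≠ 0) :
    ∫ θ in (0 : ℝ)..π, cos (m * θ) = 0 := by
  simpa [Chebyshev.integral_measureT_eq_integral_cos, Chebyshev.T_real_cos] using
    Chebyshev.integral_eval_T_real_measureT_of_ne_zero hm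

theorem integral_cos_natCast_mul_mul_cos_of_ne {j k : ℕ} (h : j ≠ k) :
    ∫ θ in (0 : ℝ)..π, cos (j * θ) * cos (k * θ) = 0 := by
  have hsub := integral_cos_intCast_mul_eq_zero (m := j - k) (by omega)
  have hadd := integral_cos_intCast_mul_eq_zero (m := j + k) (by omega)
  push_cast at hsub hadd
  have hprod (θ : ℝ) :
      cos (j * θ) * cos (k * θ) = (cos ((j - k) * θ) + cos ((j + k) * θ)) / 2 := by
    rw [sub_mul, add_mul, ← two_mul_cos_mul_cos]; ring
  simp_rw [hprod]
  rw [intervalIntegral.integral_div, intervalIntegral.integral_add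
    ((by fun_prop : Continuous _).intervalIntegrable _ _)
    ((by fun_prop : Continuous _).intervalIntegrable _ _), hsub, hadd]
  simp

theorem integral_sin_natCast_mul_mul_sin_of_ne {j k : ℕ} (h : j ≠ k) :
    ∫ θ in (0 : ℝ)..π, sin (j * θ) * sin (k * θ) = 0 := by
  have hsub := integral_cos_intCast_mul_eq_zero (m := j - k) (by omega)
  have hadd := integral_cos_intCast_mul_eq_zero (m := j + k) (by omega)
  push_cast at hsub hadd
  have hprod (θ : ℝ) :
      sin (j * θ) * sin (k * θ) = (cos ((j - k) * θ) - cos ((j + k) * θ)) / 2 := by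
    rw [sub_mul, add_mul, ← two_mul_sin_mul_sin]; ring
  simp_rw [hprod]
  rw [intervalIntegral.integral_div, intervalIntegral.integral_sub
    ((by fun_prop : Continuous _).intervalIntegrable _ _)
    ((by fun_prop : Continuous _).intervalIntegrable _ _), hsub, hadd]
  simp

theorem integral_sin_natCast_mul_sq_le_integral_cos_sq (k : ℕ) :
    ∫ θ in (0 : ℝ)..π, sin (k * θ) ^ 2 ≤ ∫ θ in (0 : ℝ)..π, cos (k * θ) ^ 2 := by
  rcases eq_or_ne k 0 with rfl | hk
  · simp [pi_pos.le]
  have hdouble := integral_cos_intCast_mul_eq_zero (m := 2 * k) (by omega)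
  push_cast at hdouble
  simp_rw [mul_assoc, cos_two_mul'] at hdouble
  rw [intervalIntegral.integral_sub ((by fun_prop : Continuous _).intervalIntegrable _ _)
    ((by fun_prop : Continuous _).intervalIntegrable _ _)] at hdouble
  linarith

theorem integral_sq_sum_cos_natCast_mul (s : Finset ℕ) (c : ℕ → ℝ) :
    ∫ θ in (0 : ℝ)..π, (∑ k ∈ s, c k * cos (k * θ)) ^ 2
      = ∑ k ∈ s, c k ^ 2 * ∫ θ in (0 : ℝ)..π, cos (k * θ) ^ 2 := by
  simp only [intervalIntegral.integral_of_le pi_pos.le]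
  refine integral_sq_sum_of_orthogonal s c _ (fun _ _ _ _ ↦ ?_) fun j _ k _ h ↦ ?_
  · exact (by fun_prop : Continuous _).integrableOn_Ioc
  · simpa [intervalIntegral.integral_of_le pi_pos.le] using
      integral_cos_natCast_mul_mul_cos_of_ne h

theorem integral_sq_sum_sin_natCast_mul (s : Finset ℕ) (c : ℕ → ℝ) :
    ∫ θ in (0 : ℝ)..π, (∑ k ∈ s, c k * sin (k * θ)) ^ 2
      = ∑ k ∈ s, c k ^ 2 * ∫ θ in (0 : ℝ)..π, sin (k * θ) ^ 2 := by
  simp only [intervalIntegral.integral_of_le pi_pos.le]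
  refine integral_sq_sum_of_orthogonal s c _ (fun _ _ _ _ ↦ ?_) fun j _ k _ h ↦ ?_
  · exact (by fun_prop : Continuous _).integrableOn_Ioc
  · simpa [intervalIntegral.integral_of_le pi_pos.le] using
      integral_sin_natCast_mul_mul_sin_of_ne h

theorem integral_Ioo_div_sqrt_one_sub_sq (f : ℝ → ℝ) :
    ∫ x in Ioo (-1 : ℝ) 1, f x / √(1 - x ^ 2) = ∫ θ in (0 : ℝ)..π, f (cos θ) := by
  rw [← Chebyshev.integral_measureT_eq_integral_cos, Chebyshev.integral_measureT,
    intervalIntegral.integral_of_le (by norm_num), integral_Ioc_eq_integral_Ioo]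
  simp_rw [div_eq_mul_inv, sqrt_inv]

theorem integral_Ioo_sqrt_one_sub_sq_mul (f : ℝ → ℝ) :
    ∫ x in Ioo (-1 : ℝ) 1, √(1 - x ^ 2) * f x = ∫ θ in (0 : ℝ)..π, sin θ ^ 2 * f (cos θ) := by
  have hweight (x : ℝ) : √(1 - x ^ 2) * f x = (1 - x ^ 2) * f x / √(1 - x ^ 2) := by
    rw [mul_div_right_comm, div_sqrt]
  simp_rw [hweight, integral_Ioo_div_sqrt_one_sub_sq, sin_sq]

namespace Polynomial.Chebyshev

theorem sin_mul_eval_derivative_T_real_cos (k : ℕ) (θ : ℝ) :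
    sin θ * (derivative (T ℝ k)).eval (cos θ) = k * sin (k * θ) := by
  have hU := U_real_cos θ (k - 1 : ℤ)
  rw [Int.cast_sub, Int.cast_one, sub_add_cancel, Int.cast_natCast] at hU
  rw [T_derivative_eq_U, eval_mul, eval_intCast, Int.cast_natCast]
  linear_combination (k : ℝ) * hU

theorem exists_eq_sum_smul_T_of_degree_le {n : ℕ} {P : ℝ[X]} (hP : P.degree ≤ n) :
    ∃ a : ℕ → ℝ, P = ∑ k ∈ Finset.Iic n, a k • T ℝ k := by
  let S : Sequence ℝ := ⟨fun k ↦ T ℝ k, fun k ↦ by simp [degree_T]⟩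
  have hmem : P ∈ Submodule.span ℝ (S '' ↑(Finset.Iic n)) := by
    rw [Finset.coe_Iic, S.span_degreeLE fun k _ ↦ by simp [S, leadingCoeff_T]]
    exact mem_degreeLE.2 hP
  obtain ⟨a, ha⟩ := (Submodule.mem_span_image_finset_iff_exists_fun' ℝ).1 hmem
  exact ⟨a, ha.symm⟩

theorem eval_sum_smul_T_real_cos (s : Finset ℕ) (a : ℕ → ℝ) (θ : ℝ) :
    (∑ k ∈ s, a k • T ℝ k).eval (cos θ) = ∑ k ∈ s, a k * cos (k * θ) := by
  simp [eval_finsetSum, T_real_cos]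

theorem sin_mul_eval_derivative_sum_smul_T_real_cos (s : Finset ℕ) (a : ℕ → ℝ) (θ : ℝ) :
    sin θ * (derivative (∑ k ∈ s, a k • T ℝ k)).eval (cos θ)
      = ∑ k ∈ s, (k * a k) * sin (k * θ) := by
  simp only [derivative_sum, derivative_smul, eval_finsetSum, eval_smul, smul_eq_mul,
    Finset.mul_sum, mul_left_comm (sin θ), sin_mul_eval_derivative_T_real_cos]
  exact Finset.sum_congr rfl fun k _ ↦ by ring

end Polynomial.Chebyshev

theorem l2_bernstein_chebyshev_weight_general (n : ℕ) (P : Polynomial ℝ)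
    (hP : P.degree ≤ n) :
    (∫ x in Set.Ioo (-1 : ℝ) 1, Real.sqrt (1 - x ^ 2) * (Polynomial.derivative P).eval x ^ 2) ≤
      (n : ℝ) ^ 2 * ∫ x in Set.Ioo (-1 : ℝ) 1, P.eval x ^ 2 / Real.sqrt (1 - x ^ 2) := by
  obtain ⟨a, rfl⟩ := Chebyshev.exists_eq_sum_smul_T_of_degree_le hP
  rw [integral_Ioo_sqrt_one_sub_sq_mul fun x ↦ (derivative _).eval x ^ 2,
    integral_Ioo_div_sqrt_one_sub_sq fun x ↦ eval x _ ^ 2]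
  simp_rw [← mul_pow, Chebyshev.sin_mul_eval_derivative_sum_smul_T_real_cos,
    Chebyshev.eval_sum_smul_T_real_cos]
  rw [integral_sq_sum_sin_natCast_mul, integral_sq_sum_cos_natCast_mul, Finset.mul_sum]
  refine Finset.sum_le_sum fun k hk ↦ ?_
  have hkn : (k : ℝ) ^ 2 ≤ n ^ 2 := by gcongr; exact_mod_cast Finset.mem_Iic.1 hk
  have hsin_nonneg : 0 ≤ ∫ θ in (0 : ℝ)..π, sin (k * θ) ^ 2 :=
    intervalIntegral.integral_nonneg pi_pos.le fun _ _ ↦ sq_nonneg _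
  calc (k * a k) ^ 2 * ∫ θ in (0 : ℝ)..π, sin (k * θ) ^ 2
      = k ^ 2 * (a k ^ 2 * ∫ θ in (0 : ℝ)..π, sin (k * θ) ^ 2) := by ring
    _ ≤ n ^ 2 * (a k ^ 2 * ∫ θ in (0 : ℝ)..π, cos (k * θ) ^ 2) := by
      gcongr
      exact integral_sin_natCast_mul_sq_le_integral_cos_sq k

/-- The weighted L²-Bernstein inequality for the Chebyshev weight (the case
`α = β = −1/2` of the Guessab–Milovanović inequality): for a real polynomial `P`
of degree at most `n ≥ 1`,
`∫_{−1}^1 √(1−x²) P'(x)² dx ≤ n² ∫_{−1}^1 P(x)²/√(1−x²) dx`. -/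
theorem l2_bernstein_chebyshev_weight (n : ℕ) (hn : 1 ≤ n) (P : Polynomial ℝ)
    (hP : P.degree ≤ n) :
    (∫ x in Set.Ioo (-1 : ℝ) 1, Real.sqrt (1 - x ^ 2) * (Polynomial.derivative P).eval x ^ 2) ≤
      (n : ℝ) ^ 2 * ∫ x in Set.Ioo (-1 : ℝ) 1, P.eval x ^ 2 / Real.sqrt (1 - x ^ 2) :=
  l2_bernstein_chebyshev_weight_general n P hP
end
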